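/- arXiv:2408.15102 — 8 statements merged into one kernel-verified Lean document; each statement's English description precedes it below -/
import Mathlib

section
/- The perturbed projection and inclusion satisfy p' ∘ i' = id_N. -/
theorem perturbed_p_comp_i
    {R : Type*} [CommRing R] {M N : Type*}
    [AddCommGroup M] [Module R M] [AddCommGroup N] [Module R N]
    (dM : M →ₗ[R] M) (dN : N →ₗ[R] N)
    (hdM : dM ∘ₗ dM = 0) (hdN : dN ∘ₗ dN = 0)
    (i : N →ₗ[R] M) (p : M →ₗ[R] N) (h : M →ₗ[R] M)
    (hdi : dM ∘ₗ i = i ∘ₗ dN) (hpd : p ∘ₗ dM = dN ∘ₗ p)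
    (hpi : p ∘ₗ i = LinearMap.id)
    (hhtp : LinearMap.id - i ∘ₗ p = dM ∘ₗ h + h ∘ₗ dM)
    (hhh : h ∘ₗ h = 0) (hhi : h ∘ₗ i = 0) (hph : p ∘ₗ h = 0)
    (x : M →ₗ[R] M) (hx : (dM + x) ∘ₗ (dM + x) = 0)
    (K : ℕ) (hK : (x ∘ₗ h) ^ K = 0) :
    let S : M →ₗ[R] M := ∑ k ∈ Finset.range K, (x ∘ₗ h) ^ k
    let S' : M →ₗ[R] M := ∑ k ∈ Finset.range (K + 1), (h ∘ₗ x) ^ k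
    let i' : N →ₗ[R] M := S' ∘ₗ i
    let p' : M →ₗ[R] N := p ∘ₗ S
    let h' : M →ₗ[R] M := h ∘ₗ S
    let dN' : N →ₗ[R] N := dN + p ∘ₗ S ∘ₗ x ∘ₗ i
    p' ∘ₗ i' = LinearMap.id := by
  intro S S' i' p' h' dN'
  show (p ∘ₗ S) ∘ₗ (S' ∘ₗ i) = LinearMap.id
  -- geometric series identity
  have hS1 : S * (1 - x ∘ₗ h) = 1 := by
    have hg := geom_sum_mul (x ∘ₗ h) K
    rw [hK] at hg
    have hg' : S * (x ∘ₗ h - 1) = -1 := by simpa [S] using hg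
    have : S * (1 - x ∘ₗ h) = -(S * (x ∘ₗ h - 1)) := by noncomm_ring
    rw [this, hg', neg_neg]
  have hSh : S * h = h := by
    have h1 : (1 - x ∘ₗ h) * h = h := by
      have : (x ∘ₗ h) * h = x ∘ₗ (h ∘ₗ h) := by
        rw [Module.End.mul_eq_comp, LinearMap.comp_assoc]
      rw [sub_mul, one_mul, this, hhh, LinearMap.comp_zero, sub_zero]
    calc S * h = S * ((1 - x ∘ₗ h) * h) := by rw [h1]
    _ = (S * (1 - x ∘ₗ h)) * h := by rw [mul_assoc]
    _ = h := by rw [hS1, one_mul]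
  have hSi : S ∘ₗ i = i := by
    have h1 : (1 - x ∘ₗ h) ∘ₗ i = i := by
      rw [LinearMap.sub_comp, LinearMap.comp_assoc, hhi, LinearMap.comp_zero,
        sub_zero, Module.End.one_eq_id, LinearMap.id_comp]
    calc S ∘ₗ i = S ∘ₗ ((1 - x ∘ₗ h) ∘ₗ i) := by rw [h1]
    _ = (S * (1 - x ∘ₗ h)) ∘ₗ i := by rw [Module.End.mul_eq_comp, LinearMap.comp_assoc]
    _ = i := by rw [hS1, Module.End.one_eq_id, LinearMap.id_comp]
  -- S * S' = S + h * T
  have hSS' : S * S' = S + h * (∑ k ∈ Finset.range K, x * (h ∘ₗ x) ^ k) := by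
    have : S' = 1 + ∑ k ∈ Finset.range K, (h ∘ₗ x) ^ (k + 1) := by
      rw [show S' = ∑ k ∈ Finset.range (K + 1), (h ∘ₗ x) ^ k from rfl,
        Finset.sum_range_succ']
      simp [add_comm]
    rw [this, mul_add, mul_one, Finset.mul_sum, Finset.mul_sum]
    congr 1
    apply Finset.sum_congr rfl
    intro k _
    show S * (h * x) ^ (k + 1) = h * (x * (h * x) ^ k)
    have hassoc : S * ((h * x) * (h * x) ^ k) = (S * h) * (x * (h * x) ^ k) := by
      noncomm_ring
    rw [pow_succ', hassoc, hSh]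
  -- finish
  have : (p ∘ₗ S) ∘ₗ (S' ∘ₗ i) = p ∘ₗ ((S * S') ∘ₗ i) := by
    rw [Module.End.mul_eq_comp, LinearMap.comp_assoc, LinearMap.comp_assoc]
  rw [this, hSS', LinearMap.add_comp, LinearMap.comp_add, hSi, hpi,
    Module.End.mul_eq_comp, LinearMap.comp_assoc, ← LinearMap.comp_assoc _ _ p,
    hph, LinearMap.zero_comp, add_zero]
end

section
/- The perturbed retract is again strong, i.e. the side conditions persist: h' ∘ h' = 0, h' ∘ i' = 0, and p' ∘ h' = 0. -/
theorem perturbed_side_conditions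
    {R : Type*} [CommRing R] {M N : Type*}
    [AddCommGroup M] [Module R M] [AddCommGroup N] [Module R N]
    (dM : M →ₗ[R] M) (dN : N →ₗ[R] N)
    (hdM : dM ∘ₗ dM = 0) (hdN : dN ∘ₗ dN = 0)
    (i : N →ₗ[R] M) (p : M →ₗ[R] N) (h : M →ₗ[R] M)
    (hdi : dM ∘ₗ i = i ∘ₗ dN) (hpd : p ∘ₗ dM = dN ∘ₗ p)
    (hpi : p ∘ₗ i = LinearMap.id)
    (hhtp : LinearMap.id - i ∘ₗ p = dM ∘ₗ h + h ∘ₗ dM)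
    (hhh : h ∘ₗ h = 0) (hhi : h ∘ₗ i = 0) (hph : p ∘ₗ h = 0)
    (x : M →ₗ[R] M) (hx : (dM + x) ∘ₗ (dM + x) = 0)
    (K : ℕ) (hK : (x ∘ₗ h) ^ K = 0) :
    let S : M →ₗ[R] M := ∑ k ∈ Finset.range K, (x ∘ₗ h) ^ k
    let S' : M →ₗ[R] M := ∑ k ∈ Finset.range (K + 1), (h ∘ₗ x) ^ k
    let i' : N →ₗ[R] M := S' ∘ₗ i
    let p' : M →ₗ[R] N := p ∘ₗ S
    let h' : M →ₗ[R] M := h ∘ₗ S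
    let dN' : N →ₗ[R] N := dN + p ∘ₗ S ∘ₗ x ∘ₗ i
    h' ∘ₗ h' = 0 ∧ h' ∘ₗ i' = 0 ∧ p' ∘ₗ h' = 0 := by
  intro S S' i' p' h' dN'
  have hhh' : (h : Module.End R M) * h = 0 := hhh
  have key1 : ∀ k : ℕ, ((x : Module.End R M) * h) ^ (k + 1) * h = 0 := by
    intro k
    rw [pow_succ, mul_assoc, mul_assoc, hhh', mul_zero, mul_zero]
  have key2 : ∀ k : ℕ, (h : Module.End R M) * ((h * x) ^ (k + 1)) = 0 := by
    intro k
    rw [pow_succ', ← mul_assoc, ← mul_assoc, hhh', zero_mul, zero_mul]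
  have keyC : ∀ k : ℕ, (h : Module.End R M) * (x * h) ^ k = (h * x) ^ k * h := by
    intro k
    induction k with
    | zero => simp
    | succ n ih =>
        rw [pow_succ, ← mul_assoc, ih, pow_succ, mul_assoc, mul_assoc, mul_assoc,
          ← mul_assoc h x h]
  have A : (S : Module.End R M) * h = h := by
    cases K with
    | zero =>
        have h1 : (1 : Module.End R M) = 0 := by simpa using hK
        have h0 : (h : Module.End R M) = 0 := by
          calc (h : Module.End R M) = 1 * h := (one_mul h).symm
          _ = 0 := by rw [h1, zero_mul]
        simp [S, h0]
    | succ n =>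
        show (∑ k ∈ Finset.range (n + 1), ((x : Module.End R M) * h) ^ k) * h = h
        rw [Finset.sum_mul, Finset.sum_range_succ']
        simp [key1]
  have B : (h : Module.End R M) * S' = h := by
    show (h : Module.End R M) * (∑ k ∈ Finset.range (K + 1), ((h : Module.End R M) * x) ^ k) = h
    rw [Finset.mul_sum, Finset.sum_range_succ']
    simp [key2]
  have C : (h : Module.End R M) * S =
      (∑ k ∈ Finset.range K, ((h : Module.End R M) * x) ^ k) * h := by
    show (h : Module.End R M) * (∑ k ∈ Finset.range K, ((x : Module.End R M) * h) ^ k) = _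
    rw [Finset.mul_sum, Finset.sum_mul]
    exact Finset.sum_congr rfl fun k _ => keyC k
  refine ⟨?_, ?_, ?_⟩
  · show (h : Module.End R M) * S * ((h : Module.End R M) * S) = 0
    rw [mul_assoc, ← mul_assoc S h, A, ← mul_assoc, hhh', zero_mul]
  · show ((h : Module.End R M) * S) ∘ₗ (S' ∘ₗ i) = 0
    rw [← LinearMap.comp_assoc]
    have : ((h : Module.End R M) * S) ∘ₗ S' = ((h : Module.End R M) * S) * S' := rfl
    rw [this, C, mul_assoc, B, Module.End.mul_eq_comp, LinearMap.comp_assoc, hhi,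
      LinearMap.comp_zero]
  · show p ∘ₗ S ∘ₗ ((h : Module.End R M) * S) = 0
    have : (S : Module.End R M) ∘ₗ ((h : Module.End R M) * S) = S * (h * S) := rfl
    rw [this, ← mul_assoc, A, Module.End.mul_eq_comp, ← LinearMap.comp_assoc, hph,
      LinearMap.zero_comp]
end

section
/- Multiplicative homological perturbation lemma, derivation part: the perturbed differential d_N' := d_N + p ∘ Σ ∘ x ∘ i is again a graded derivation of degree +1 of the graded algebra N, i.e. d_N'(ab) = d_N'(a)·b + (−1)^{|a|} a·d_N'(b) for all homogeneous a and all b in N. -/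
/-!
Write `T := x ∘ h`. Since `h` is an `(i ∘ p, id)`-derivation killed by `p`, by `h` and on the image
of `i`, every map `p ∘ Tᵏ` is a bimodule map along `i` on homogeneous elements:
`p (Tᵏ (i a * m)) = a * p (Tᵏ m)` and `p (Tᵏ (w * i b)) = p (Tᵏ w) * b`. Indeed, pushing `T`
through such a product leaves error terms of the shape `u * h v` or `h u * v`, and `p ∘ Tᵏ` kills
both. So `p ∘ Σ` is a bimodule map along `i`, and composed with the `i`-derivation `x ∘ i` it gives a
graded derivation of `N`; adding `d_N` keeps this property.
-/

namespace MultiplicativeHPL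

local notation "ε" n:max => (((-1 : ℤˣ) ^ n : ℤˣ) : ℤ)

variable {R : Type*} [CommRing R] {M N : Type*} [Ring M] [Algebra R M] [Ring N] [Algebra R N]
  {𝒜 : ℤ → Submodule R M} {ℬ : ℤ → Submodule R N}
  {i : N →ₗ[R] M} {p : M →ₗ[R] N} {h x : M →ₗ[R] M}

theorem h_mul_h_eq_zero (hhh : ∀ z, h (h z) = 0) (hph : ∀ z, p (h z) = 0)
    (hhder : ∀ (n : ℤ), ∀ a ∈ 𝒜 n, ∀ b : M, h (a * b) = h a * i (p b) + (ε n) • (a * h b))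
    {n : ℤ} {a : M} (ha : a ∈ 𝒜 n) (z : M) :
    h (a * h z) = 0 := by
  rw [hhder n a ha, hph, hhh, map_zero, mul_zero, mul_zero, smul_zero, add_zero]

theorem p_pow_apply_mul_h_eq_zero (hhh : ∀ z, h (h z) = 0) (hph : ∀ z, p (h z) = 0)
    (hpmul : ∀ a b : M, p (a * b) = p a * p b)
    (hhder : ∀ (n : ℤ), ∀ a ∈ 𝒜 n, ∀ b : M, h (a * b) = h a * i (p b) + (ε n) • (a * h b))
    (k : ℕ) {n : ℤ} {a : M} (ha : a ∈ 𝒜 n) (z : M) :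
    p (((x ∘ₗ h) ^ k) (a * h z)) = 0 := by
  cases k with
  | zero => rw [pow_zero, Module.End.one_apply, hpmul, hph, mul_zero]
  | succ k =>
    rw [pow_succ, Module.End.mul_apply, LinearMap.comp_apply, h_mul_h_eq_zero hhh hph hhder ha,
      map_zero, map_zero, map_zero]

theorem p_pow_apply_h_mul_eq_zero (hhh : ∀ z, h (h z) = 0) (hph : ∀ z, p (h z) = 0)
    (hpmul : ∀ a b : M, p (a * b) = p a * p b)
    (hhdeg : ∀ (n : ℤ), ∀ a ∈ 𝒜 n, h a ∈ 𝒜 (n - 1))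
    (hhder : ∀ (n : ℤ), ∀ a ∈ 𝒜 n, ∀ b : M, h (a * b) = h a * i (p b) + (ε n) • (a * h b))
    (hxdeg : ∀ (n : ℤ), ∀ a ∈ 𝒜 n, x a ∈ 𝒜 (n + 1))
    (hxder : ∀ (n : ℤ), ∀ a ∈ 𝒜 n, ∀ b : M, x (a * b) = x a * b + (ε n) • (a * x b))
    (k : ℕ) : ∀ {n : ℤ} {c : M}, c ∈ 𝒜 n → ∀ z : M, p (((x ∘ₗ h) ^ k) (h c * z)) = 0 := by
  induction k with
  | zero => intro n c _ z; rw [pow_zero, Module.End.one_apply, hpmul, hph, zero_mul]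
  | succ k ih =>
    intro n c hc z
    have hhc := hhdeg n c hc
    have hT : (x ∘ₗ h) (h c * z) =
        (ε (n - 1)) • (x (h c) * h z + (ε (n - 1)) • (h c * x (h z))) := by
      rw [LinearMap.comp_apply, hhder _ _ hhc, hhh, zero_mul, zero_add, map_zsmul, hxder _ _ hhc]
    rw [pow_succ, Module.End.mul_apply, hT, map_zsmul, map_add, map_zsmul, map_zsmul, map_add,
      map_zsmul, p_pow_apply_mul_h_eq_zero hhh hph hpmul hhder k (hxdeg _ _ hhc), ih hc,
      smul_zero, add_zero, smul_zero]

theorem p_pow_apply_i_mul (hhh : ∀ z, h (h z) = 0) (hph : ∀ z, p (h z) = 0)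
    (hhi : ∀ a, h (i a) = 0) (hpi : ∀ a, p (i a) = a)
    (hpmul : ∀ a b : M, p (a * b) = p a * p b) (hideg : ∀ (n : ℤ), ∀ a ∈ ℬ n, i a ∈ 𝒜 n)
    (hhder : ∀ (n : ℤ), ∀ a ∈ 𝒜 n, ∀ b : M, h (a * b) = h a * i (p b) + (ε n) • (a * h b))
    (hxdeg : ∀ (n : ℤ), ∀ a ∈ 𝒜 n, x a ∈ 𝒜 (n + 1))
    (hxder : ∀ (n : ℤ), ∀ a ∈ 𝒜 n, ∀ b : M, x (a * b) = x a * b + (ε n) • (a * x b))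
    (k : ℕ) {n : ℤ} {a : N} (ha : a ∈ ℬ n) :
    ∀ m : M, p (((x ∘ₗ h) ^ k) (i a * m)) = a * p (((x ∘ₗ h) ^ k) m) := by
  have hia := hideg n a ha
  induction k with
  | zero => intro m; rw [pow_zero, Module.End.one_apply, Module.End.one_apply, hpmul, hpi]
  | succ k ih =>
    intro m
    have hT : (x ∘ₗ h) (i a * m) = (ε n) • (x (i a) * h m) + i a * (x ∘ₗ h) m := by
      rw [LinearMap.comp_apply, hhder _ _ hia, hhi, zero_mul, zero_add, map_zsmul, hxder _ _ hia,
        smul_add, smul_smul, ← Units.val_mul, Int.units_mul_self, Units.val_one, one_smul,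
        LinearMap.comp_apply]
    rw [pow_succ, Module.End.mul_apply, hT, map_add, map_add, map_zsmul, map_zsmul,
      p_pow_apply_mul_h_eq_zero hhh hph hpmul hhder k (hxdeg _ _ hia), smul_zero, zero_add, ih,
      Module.End.mul_apply]

theorem p_pow_apply_mul_i (hhh : ∀ z, h (h z) = 0) (hph : ∀ z, p (h z) = 0)
    (hhi : ∀ a, h (i a) = 0) (hpi : ∀ a, p (i a) = a)
    (hpmul : ∀ a b : M, p (a * b) = p a * p b)
    (hhdeg : ∀ (n : ℤ), ∀ a ∈ 𝒜 n, h a ∈ 𝒜 (n - 1))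
    (hhder : ∀ (n : ℤ), ∀ a ∈ 𝒜 n, ∀ b : M, h (a * b) = h a * i (p b) + (ε n) • (a * h b))
    (hxdeg : ∀ (n : ℤ), ∀ a ∈ 𝒜 n, x a ∈ 𝒜 (n + 1))
    (hxder : ∀ (n : ℤ), ∀ a ∈ 𝒜 n, ∀ b : M, x (a * b) = x a * b + (ε n) • (a * x b))
    (k : ℕ) (b : N) : ∀ {n : ℤ} {w : M}, w ∈ 𝒜 n →
    p (((x ∘ₗ h) ^ k) (w * i b)) = p (((x ∘ₗ h) ^ k) w) * b := by
  induction k with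
  | zero => intro n w _; rw [pow_zero, Module.End.one_apply, Module.End.one_apply, hpmul, hpi]
  | succ k ih =>
    intro n w hw
    have hhw := hhdeg n w hw
    have hT : (x ∘ₗ h) (w * i b) = x (h w) * i b + (ε (n - 1)) • (h w * x (i b)) := by
      rw [LinearMap.comp_apply, hhder _ _ hw, hhi, mul_zero, smul_zero, add_zero, hpi,
        hxder _ _ hhw]
    rw [pow_succ, Module.End.mul_apply, hT, map_add, map_add, map_zsmul, map_zsmul,
      p_pow_apply_h_mul_eq_zero hhh hph hpmul hhdeg hhder hxdeg hxder k hw, smul_zero, add_zero,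
      ih (hxdeg _ _ hhw), Module.End.mul_apply, LinearMap.comp_apply]

theorem pow_apply_mem (hhdeg : ∀ (n : ℤ), ∀ a ∈ 𝒜 n, h a ∈ 𝒜 (n - 1))
    (hxdeg : ∀ (n : ℤ), ∀ a ∈ 𝒜 n, x a ∈ 𝒜 (n + 1)) (k : ℕ) {n : ℤ} {m : M} (hm : m ∈ 𝒜 n) :
    ((x ∘ₗ h) ^ k) m ∈ 𝒜 n := by
  induction k with
  | zero => rwa [pow_zero, Module.End.one_apply]
  | succ k ih =>
    rw [pow_succ', Module.End.mul_apply, LinearMap.comp_apply]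
    simpa using hxdeg _ _ (hhdeg _ _ ih)

theorem p_sum_pow_apply_i_mul (hhh : ∀ z, h (h z) = 0) (hph : ∀ z, p (h z) = 0)
    (hhi : ∀ a, h (i a) = 0) (hpi : ∀ a, p (i a) = a)
    (hpmul : ∀ a b : M, p (a * b) = p a * p b) (hideg : ∀ (n : ℤ), ∀ a ∈ ℬ n, i a ∈ 𝒜 n)
    (hhder : ∀ (n : ℤ), ∀ a ∈ 𝒜 n, ∀ b : M, h (a * b) = h a * i (p b) + (ε n) • (a * h b))
    (hxdeg : ∀ (n : ℤ), ∀ a ∈ 𝒜 n, x a ∈ 𝒜 (n + 1))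
    (hxder : ∀ (n : ℤ), ∀ a ∈ 𝒜 n, ∀ b : M, x (a * b) = x a * b + (ε n) • (a * x b))
    (K : ℕ) {n : ℤ} {a : N} (ha : a ∈ ℬ n) (m : M) :
    p ((∑ k ∈ Finset.range K, (x ∘ₗ h) ^ k) (i a * m)) =
      a * p ((∑ k ∈ Finset.range K, (x ∘ₗ h) ^ k) m) := by
  simp only [LinearMap.sum_apply, map_sum, Finset.mul_sum,
    p_pow_apply_i_mul hhh hph hhi hpi hpmul hideg hhder hxdeg hxder _ ha]

theorem p_sum_pow_apply_mul_i (hhh : ∀ z, h (h z) = 0) (hph : ∀ z, p (h z) = 0)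
    (hhi : ∀ a, h (i a) = 0) (hpi : ∀ a, p (i a) = a)
    (hpmul : ∀ a b : M, p (a * b) = p a * p b)
    (hhdeg : ∀ (n : ℤ), ∀ a ∈ 𝒜 n, h a ∈ 𝒜 (n - 1))
    (hhder : ∀ (n : ℤ), ∀ a ∈ 𝒜 n, ∀ b : M, h (a * b) = h a * i (p b) + (ε n) • (a * h b))
    (hxdeg : ∀ (n : ℤ), ∀ a ∈ 𝒜 n, x a ∈ 𝒜 (n + 1))
    (hxder : ∀ (n : ℤ), ∀ a ∈ 𝒜 n, ∀ b : M, x (a * b) = x a * b + (ε n) • (a * x b))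
    (K : ℕ) (b : N) {n : ℤ} {w : M} (hw : w ∈ 𝒜 n) :
    p ((∑ k ∈ Finset.range K, (x ∘ₗ h) ^ k) (w * i b)) =
      p ((∑ k ∈ Finset.range K, (x ∘ₗ h) ^ k) w) * b := by
  simp only [LinearMap.sum_apply, map_sum, Finset.sum_mul,
    p_pow_apply_mul_i hhh hph hhi hpi hpmul hhdeg hhder hxdeg hxder _ b hw]

theorem sum_pow_apply_mem (hhdeg : ∀ (n : ℤ), ∀ a ∈ 𝒜 n, h a ∈ 𝒜 (n - 1))
    (hxdeg : ∀ (n : ℤ), ∀ a ∈ 𝒜 n, x a ∈ 𝒜 (n + 1)) (K : ℕ) {n : ℤ} {m : M} (hm : m ∈ 𝒜 n) :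
    (∑ k ∈ Finset.range K, (x ∘ₗ h) ^ k) m ∈ 𝒜 n := by
  rw [LinearMap.sum_apply]
  exact Submodule.sum_mem _ fun k _ ↦ pow_apply_mem hhdeg hxdeg k hm

theorem bimoduleMap_comp_derivation_apply_mul (φ : M →ₗ[R] N)
    (hφi_mul : ∀ {n : ℤ} {a : N}, a ∈ ℬ n → ∀ m : M, φ (i a * m) = a * φ m)
    (hφmul_i : ∀ b : N, ∀ {n : ℤ} {w : M}, w ∈ 𝒜 n → φ (w * i b) = φ w * b)
    (himul : ∀ a b : N, i (a * b) = i a * i b) (hideg : ∀ (n : ℤ), ∀ a ∈ ℬ n, i a ∈ 𝒜 n)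
    (hxdeg : ∀ (n : ℤ), ∀ a ∈ 𝒜 n, x a ∈ 𝒜 (n + 1))
    (hxder : ∀ (n : ℤ), ∀ a ∈ 𝒜 n, ∀ b : M, x (a * b) = x a * b + (ε n) • (a * x b))
    {n : ℤ} {a : N} (ha : a ∈ ℬ n) (b : N) :
    φ (x (i (a * b))) = φ (x (i a)) * b + (ε n) • (a * φ (x (i b))) := by
  have hia := hideg n a ha
  rw [himul, hxder n _ hia, map_add, map_zsmul, hφmul_i b (hxdeg _ _ hia), hφi_mul ha]

end MultiplicativeHPL

theorem multiplicative_hpl_derivation_general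
    {R : Type*} [CommRing R] {M N : Type*}
    [Ring M] [Algebra R M] [Ring N] [Algebra R N]
    (𝒜 : ℤ → Submodule R M) (ℬ : ℤ → Submodule R N)
    (dN : N →ₗ[R] N)
    (i : N →ₗ[R] M) (p : M →ₗ[R] N) (h : M →ₗ[R] M)
    (hpi : p ∘ₗ i = LinearMap.id)
    (hhh : h ∘ₗ h = 0) (hhi : h ∘ₗ i = 0) (hph : p ∘ₗ h = 0)
    (x : M →ₗ[R] M)
    (K : ℕ)
    -- `d_M`, `d_N` and `x` are homogeneous of degree `+1` and graded derivations
    (hdNdeg : ∀ (n : ℤ), ∀ a ∈ ℬ n, dN a ∈ ℬ (n + 1))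
    (hdNder : ∀ (n : ℤ), ∀ a ∈ ℬ n, ∀ b : N,
      dN (a * b) = dN a * b + (((-1 : ℤˣ) ^ n : ℤˣ) : ℤ) • (a * dN b))
    (hxdeg : ∀ (n : ℤ), ∀ a ∈ 𝒜 n, x a ∈ 𝒜 (n + 1))
    (hxder : ∀ (n : ℤ), ∀ a ∈ 𝒜 n, ∀ b : M,
      x (a * b) = x a * b + (((-1 : ℤˣ) ^ n : ℤˣ) : ℤ) • (a * x b))
    -- `i` and `p` are degree-0 unital algebra homomorphisms
    (himul : ∀ a b : N, i (a * b) = i a * i b)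
    (hideg : ∀ (n : ℤ), ∀ a ∈ ℬ n, i a ∈ 𝒜 n)
    (hpmul : ∀ a b : M, p (a * b) = p a * p b)
    (hpdeg : ∀ (n : ℤ), ∀ a ∈ 𝒜 n, p a ∈ ℬ n)
    -- `h` is homogeneous of degree `-1` and an `(i∘p, id)`-derivation
    (hhdeg : ∀ (n : ℤ), ∀ a ∈ 𝒜 n, h a ∈ 𝒜 (n - 1))
    (hhder : ∀ (n : ℤ), ∀ a ∈ 𝒜 n, ∀ b : M,
      h (a * b) = h a * i (p b) + (((-1 : ℤˣ) ^ n : ℤˣ) : ℤ) • (a * h b)) :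
    let S : M →ₗ[R] M := ∑ k ∈ Finset.range K, (x ∘ₗ h) ^ k
    let S' : M →ₗ[R] M := ∑ k ∈ Finset.range (K + 1), (h ∘ₗ x) ^ k
    let i' : N →ₗ[R] M := S' ∘ₗ i
    let p' : M →ₗ[R] N := p ∘ₗ S
    let h' : M →ₗ[R] M := h ∘ₗ S
    let dN' : N →ₗ[R] N := dN + p ∘ₗ S ∘ₗ x ∘ₗ i
    (∀ (n : ℤ), ∀ a ∈ ℬ n, dN' a ∈ ℬ (n + 1)) ∧
    (∀ (n : ℤ), ∀ a ∈ ℬ n, ∀ b : N,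
      dN' (a * b) = dN' a * b + (((-1 : ℤˣ) ^ n : ℤˣ) : ℤ) • (a * dN' b)) := by
  intro S _ _ _ _ _
  have hpi : ∀ a, p (i a) = a := LinearMap.congr_fun hpi
  have hhh : ∀ z, h (h z) = 0 := LinearMap.congr_fun hhh
  have hhi : ∀ a, h (i a) = 0 := LinearMap.congr_fun hhi
  have hph : ∀ z, p (h z) = 0 := LinearMap.congr_fun hph
  constructor
  · intro n a ha
    exact add_mem (hdNdeg n a ha)
      (hpdeg _ _ (MultiplicativeHPL.sum_pow_apply_mem hhdeg hxdeg K (hxdeg _ _ (hideg n a ha))))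
  · intro n a ha b
    have hperturb := MultiplicativeHPL.bimoduleMap_comp_derivation_apply_mul (p ∘ₗ S)
      (MultiplicativeHPL.p_sum_pow_apply_i_mul hhh hph hhi hpi hpmul hideg hhder hxdeg hxder K)
      (MultiplicativeHPL.p_sum_pow_apply_mul_i hhh hph hhi hpi hpmul hhdeg hhder hxdeg hxder K)
      himul hideg hxdeg hxder ha b
    change dN (a * b) + (p ∘ₗ S) (x (i (a * b))) = (dN a + (p ∘ₗ S) (x (i a))) * b +
      (((-1 : ℤˣ) ^ n : ℤˣ) : ℤ) • (a * (dN b + (p ∘ₗ S) (x (i b))))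
    rw [hdNder n a ha, hperturb, add_mul, mul_add, smul_add]
    abel

theorem multiplicative_hpl_derivation
    {R : Type*} [CommRing R] {M N : Type*}
    [Ring M] [Algebra R M] [Ring N] [Algebra R N]
    (𝒜 : ℤ → Submodule R M) (ℬ : ℤ → Submodule R N)
    [GradedAlgebra 𝒜] [GradedAlgebra ℬ]
    (dM : M →ₗ[R] M) (dN : N →ₗ[R] N)
    (hdM : dM ∘ₗ dM = 0) (hdN : dN ∘ₗ dN = 0)
    (i : N →ₗ[R] M) (p : M →ₗ[R] N) (h : M →ₗ[R] M)
    (hdi : dM ∘ₗ i = i ∘ₗ dN) (hpd : p ∘ₗ dM = dN ∘ₗ p)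
    (hpi : p ∘ₗ i = LinearMap.id)
    (hhtp : LinearMap.id - i ∘ₗ p = dM ∘ₗ h + h ∘ₗ dM)
    (hhh : h ∘ₗ h = 0) (hhi : h ∘ₗ i = 0) (hph : p ∘ₗ h = 0)
    (x : M →ₗ[R] M) (hx : (dM + x) ∘ₗ (dM + x) = 0)
    (K : ℕ) (hK : (x ∘ₗ h) ^ K = 0)
    -- `d_M`, `d_N` and `x` are homogeneous of degree `+1` and graded derivations
    (hdMdeg : ∀ (n : ℤ), ∀ a ∈ 𝒜 n, dM a ∈ 𝒜 (n + 1))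
    (hdMder : ∀ (n : ℤ), ∀ a ∈ 𝒜 n, ∀ b : M,
      dM (a * b) = dM a * b + (((-1 : ℤˣ) ^ n : ℤˣ) : ℤ) • (a * dM b))
    (hdNdeg : ∀ (n : ℤ), ∀ a ∈ ℬ n, dN a ∈ ℬ (n + 1))
    (hdNder : ∀ (n : ℤ), ∀ a ∈ ℬ n, ∀ b : N,
      dN (a * b) = dN a * b + (((-1 : ℤˣ) ^ n : ℤˣ) : ℤ) • (a * dN b))
    (hxdeg : ∀ (n : ℤ), ∀ a ∈ 𝒜 n, x a ∈ 𝒜 (n + 1))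
    (hxder : ∀ (n : ℤ), ∀ a ∈ 𝒜 n, ∀ b : M,
      x (a * b) = x a * b + (((-1 : ℤˣ) ^ n : ℤˣ) : ℤ) • (a * x b))
    -- `i` and `p` are degree-0 unital algebra homomorphisms
    (hione : i 1 = 1) (himul : ∀ a b : N, i (a * b) = i a * i b)
    (hideg : ∀ (n : ℤ), ∀ a ∈ ℬ n, i a ∈ 𝒜 n)
    (hpone : p 1 = 1) (hpmul : ∀ a b : M, p (a * b) = p a * p b)
    (hpdeg : ∀ (n : ℤ), ∀ a ∈ 𝒜 n, p a ∈ ℬ n)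
    -- `h` is homogeneous of degree `-1` and an `(i∘p, id)`-derivation
    (hhdeg : ∀ (n : ℤ), ∀ a ∈ 𝒜 n, h a ∈ 𝒜 (n - 1))
    (hhder : ∀ (n : ℤ), ∀ a ∈ 𝒜 n, ∀ b : M,
      h (a * b) = h a * i (p b) + (((-1 : ℤˣ) ^ n : ℤˣ) : ℤ) • (a * h b)) :
    let S : M →ₗ[R] M := ∑ k ∈ Finset.range K, (x ∘ₗ h) ^ k
    let S' : M →ₗ[R] M := ∑ k ∈ Finset.range (K + 1), (h ∘ₗ x) ^ k
    let i' : N →ₗ[R] M := S' ∘ₗ i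
    let p' : M →ₗ[R] N := p ∘ₗ S
    let h' : M →ₗ[R] M := h ∘ₗ S
    let dN' : N →ₗ[R] N := dN + p ∘ₗ S ∘ₗ x ∘ₗ i
    (∀ (n : ℤ), ∀ a ∈ ℬ n, dN' a ∈ ℬ (n + 1)) ∧
    (∀ (n : ℤ), ∀ a ∈ ℬ n, ∀ b : N,
      dN' (a * b) = dN' a * b + (((-1 : ℤˣ) ^ n : ℤˣ) : ℤ) • (a * dN' b)) :=
  multiplicative_hpl_derivation_general 𝒜 ℬ dN i p h hpi hhh hhi hph x K hdNdeg hdNder hxdeg hxder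
    himul hideg hpmul hpdeg hhdeg hhder
end

section
/- Multiplicative homological perturbation lemma, inclusion part: the perturbed inclusion i' := Σ' ∘ i is a unital algebra homomorphism from N to M: i'(1) = 1 and i'(ab) = i'(a)·i'(b) for all a, b in N. -/
/-!
Put `τ = h ∘ x`. Nilpotency of `x ∘ h` makes `τ` nilpotent, so `Σ' = ∑ τᵏ` inverts `1 - τ` and
`i' z` is the unique solution `u` of `u - τ u = i z`. The side conditions give `h ∘ i' = 0` and
`p ∘ i' = id`, and with these the twisted Leibniz rules for `x` and `h` collapse to
`τ (i' a * i' b) = (i' a - i a) * i b + i' a * (i' b - i b)` for homogeneous `a`. Hence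
`i' a * i' b - τ (i' a * i' b) = i a * i b = i (a * b)`, and uniqueness gives
`i' (a * b) = i' a * i' b`; unitality is the same argument with `τ 1 = 0`.
-/

open Finset

section GeomSum

variable {A : Type*} [Ring A] {t : A} {n : ℕ}

theorem geom_sum_mul_one_sub_of_pow_eq_zero (ht : t ^ n = 0) :
    (∑ k ∈ range n, t ^ k) * (1 - t) = 1 := by
  rw [geom_sum_mul_neg, ht, sub_zero]

theorem one_sub_mul_geom_sum_of_pow_eq_zero (ht : t ^ n = 0) :
    (1 - t) * ∑ k ∈ range n, t ^ k = 1 := by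
  rw [mul_neg_geom_sum, ht, sub_zero]

end GeomSum

section GradedDerivation

variable {R M : Type*} [CommRing R] [Ring M] [Algebra R M] {𝒜 : ℤ → Submodule R M}

theorem map_one_eq_zero_of_graded_derivation [SetLike.GradedOne 𝒜] {x : M →ₗ[R] M}
    (hxder : ∀ (n : ℤ), ∀ a ∈ 𝒜 n, ∀ b : M,
      x (a * b) = x a * b + (((-1 : ℤˣ) ^ n : ℤˣ) : ℤ) • (a * x b)) :
    x 1 = 0 := by
  simpa using hxder 0 1 SetLike.GradedOne.one_mem 1

-- The signs `(-1)ᵐ` from `x` and from `h` cancel.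
theorem homotopy_derivation_apply_mul {N : Type*} [Ring N] [Algebra R N]
    {i : N →ₗ[R] M} {p : M →ₗ[R] N} {h x : M →ₗ[R] M}
    (hxdeg : ∀ (n : ℤ), ∀ a ∈ 𝒜 n, x a ∈ 𝒜 (n + 1))
    (hxder : ∀ (n : ℤ), ∀ a ∈ 𝒜 n, ∀ b : M,
      x (a * b) = x a * b + (((-1 : ℤˣ) ^ n : ℤˣ) : ℤ) • (a * x b))
    (hhder : ∀ (n : ℤ), ∀ a ∈ 𝒜 n, ∀ b : M,
      h (a * b) = h a * i (p b) + (((-1 : ℤˣ) ^ n : ℤˣ) : ℤ) • (a * h b))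
    {m : ℤ} {u v : M} (hu : u ∈ 𝒜 m) (hhu : h u = 0) (hhv : h v = 0) :
    h (x (u * v)) = h (x u) * i (p v) + u * h (x v) := by
  rw [hxder m u hu, map_add, map_zsmul, hhder (m + 1) _ (hxdeg m u hu), hhder m u hu, hhu, hhv,
    smul_add, smul_smul, ← Units.val_mul, Int.units_mul_self]
  simp

end GradedDerivation

section PerturbedInclusion

variable {R M N : Type*} [CommRing R] [Ring M] [Algebra R M] [Ring N] [Algebra R N]

def perturbedInclusion (h x : M →ₗ[R] M) (i : N →ₗ[R] M) (K : ℕ) : N →ₗ[R] M :=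
  (∑ k ∈ range (K + 1), (h ∘ₗ x) ^ k) ∘ₗ i

variable {h x : M →ₗ[R] M} {i : N →ₗ[R] M} {K : ℕ}

theorem pow_succ_comp_eq_zero (hK : (x ∘ₗ h) ^ K = 0) : (h ∘ₗ x) ^ (K + 1) = 0 := by
  change (h * x) ^ (K + 1) = 0
  rw [pow_succ, ← mul_assoc, mul_pow_mul]
  change h * (x ∘ₗ h) ^ K * x = 0
  rw [hK, mul_zero, zero_mul]

theorem comp_perturbedInclusion {P : Type*} [AddCommGroup P] [Module R P] {f : M →ₗ[R] P}
    (hf : f ∘ₗ h = 0) : f ∘ₗ perturbedInclusion h x i K = f ∘ₗ i := by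
  have hτ (k : ℕ) (y : M) : f (((h ∘ₗ x) ^ (k + 1)) y) = 0 := by
    rw [pow_succ', Module.End.mul_apply]
    exact LinearMap.congr_fun hf _
  ext z
  simp [perturbedInclusion, sum_range_succ', LinearMap.sum_apply, hτ]

variable (hnil : (h ∘ₗ x) ^ (K + 1) = 0)
include hnil

theorem map_perturbedInclusion_eq_sub (z : N) :
    h (x (perturbedInclusion h x i K z)) = perturbedInclusion h x i K z - i z := by
  have hsolves : perturbedInclusion h x i K z - h (x (perturbedInclusion h x i K z)) = i z := by
    simpa [perturbedInclusion] using
      LinearMap.congr_fun (one_sub_mul_geom_sum_of_pow_eq_zero hnil) (i z)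
  rw [← hsolves, sub_sub_cancel]

theorem eq_perturbedInclusion_of_sub_eq {u : M} {z : N} (hu : u - h (x u) = i z) :
    u = perturbedInclusion h x i K z := by
  simpa [perturbedInclusion, ← hu] using
    (LinearMap.congr_fun (geom_sum_mul_one_sub_of_pow_eq_zero hnil) u).symm

theorem perturbedInclusion_one {𝒜 : ℤ → Submodule R M} [SetLike.GradedOne 𝒜]
    (hxder : ∀ (n : ℤ), ∀ a ∈ 𝒜 n, ∀ b : M,
      x (a * b) = x a * b + (((-1 : ℤˣ) ^ n : ℤˣ) : ℤ) • (a * x b))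
    (hione : i 1 = 1) :
    perturbedInclusion h x i K 1 = 1 :=
  (eq_perturbedInclusion_of_sub_eq hnil
    (by rw [map_one_eq_zero_of_graded_derivation hxder, map_zero, sub_zero, hione])).symm

omit hnil in
theorem perturbedInclusion_mem {𝒜 : ℤ → Submodule R M} {ℬ : ℤ → Submodule R N}
    (hxdeg : ∀ (n : ℤ), ∀ a ∈ 𝒜 n, x a ∈ 𝒜 (n + 1))
    (hhdeg : ∀ (n : ℤ), ∀ a ∈ 𝒜 n, h a ∈ 𝒜 (n - 1))
    (hideg : ∀ (n : ℤ), ∀ a ∈ ℬ n, i a ∈ 𝒜 n)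
    {n : ℤ} {a : N} (ha : a ∈ ℬ n) :
    perturbedInclusion h x i K a ∈ 𝒜 n := by
  have hτ : ∀ y ∈ 𝒜 n, (h ∘ₗ x) y ∈ 𝒜 n := fun y hy => by
    simpa using hhdeg _ _ (hxdeg n y hy)
  simp only [perturbedInclusion, LinearMap.comp_apply, LinearMap.sum_apply]
  exact Submodule.sum_mem _ fun k _ =>
    Module.End.pow_apply_mem_of_forall_mem k hτ _ (hideg n a ha)

theorem perturbedInclusion_mul_of_mem {𝒜 : ℤ → Submodule R M} {ℬ : ℤ → Submodule R N}
    {p : M →ₗ[R] N} (hpi : p ∘ₗ i = LinearMap.id)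
    (hhh : h ∘ₗ h = 0) (hhi : h ∘ₗ i = 0) (hph : p ∘ₗ h = 0)
    (hxdeg : ∀ (n : ℤ), ∀ a ∈ 𝒜 n, x a ∈ 𝒜 (n + 1))
    (hxder : ∀ (n : ℤ), ∀ a ∈ 𝒜 n, ∀ b : M,
      x (a * b) = x a * b + (((-1 : ℤˣ) ^ n : ℤˣ) : ℤ) • (a * x b))
    (himul : ∀ a b : N, i (a * b) = i a * i b)
    (hideg : ∀ (n : ℤ), ∀ a ∈ ℬ n, i a ∈ 𝒜 n)
    (hhdeg : ∀ (n : ℤ), ∀ a ∈ 𝒜 n, h a ∈ 𝒜 (n - 1))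
    (hhder : ∀ (n : ℤ), ∀ a ∈ 𝒜 n, ∀ b : M,
      h (a * b) = h a * i (p b) + (((-1 : ℤˣ) ^ n : ℤˣ) : ℤ) • (a * h b))
    {m : ℤ} {a : N} (ha : a ∈ ℬ m) (b : N) :
    perturbedInclusion h x i K (a * b) =
      perturbedInclusion h x i K a * perturbedInclusion h x i K b := by
  have hh (z : N) : h (perturbedInclusion h x i K z) = 0 :=
    LinearMap.congr_fun ((comp_perturbedInclusion hhh).trans hhi) z
  have hp (z : N) : p (perturbedInclusion h x i K z) = z :=
    LinearMap.congr_fun ((comp_perturbedInclusion hph).trans hpi) z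
  refine (eq_perturbedInclusion_of_sub_eq hnil ?_).symm
  rw [homotopy_derivation_apply_mul hxdeg hxder hhder
      (perturbedInclusion_mem hxdeg hhdeg hideg ha) (hh a) (hh b),
    hp, map_perturbedInclusion_eq_sub hnil, map_perturbedInclusion_eq_sub hnil, himul]
  noncomm_ring

end PerturbedInclusion

theorem multiplicative_hpl_inclusion_general
    {R : Type*} [CommRing R] {M N : Type*}
    [Ring M] [Algebra R M] [Ring N] [Algebra R N]
    (𝒜 : ℤ → Submodule R M) (ℬ : ℤ → Submodule R N)
    [GradedAlgebra 𝒜] [GradedAlgebra ℬ]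
    (dN : N →ₗ[R] N)
    (i : N →ₗ[R] M) (p : M →ₗ[R] N) (h : M →ₗ[R] M)
    (hpi : p ∘ₗ i = LinearMap.id)
    (hhh : h ∘ₗ h = 0) (hhi : h ∘ₗ i = 0) (hph : p ∘ₗ h = 0)
    (x : M →ₗ[R] M)
    (K : ℕ) (hK : (x ∘ₗ h) ^ K = 0)
    -- `d_M`, `d_N` and `x` are homogeneous of degree `+1` and graded derivations
    (hxdeg : ∀ (n : ℤ), ∀ a ∈ 𝒜 n, x a ∈ 𝒜 (n + 1))
    (hxder : ∀ (n : ℤ), ∀ a ∈ 𝒜 n, ∀ b : M,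
      x (a * b) = x a * b + (((-1 : ℤˣ) ^ n : ℤˣ) : ℤ) • (a * x b))
    -- `i` and `p` are degree-0 unital algebra homomorphisms
    (hione : i 1 = 1) (himul : ∀ a b : N, i (a * b) = i a * i b)
    (hideg : ∀ (n : ℤ), ∀ a ∈ ℬ n, i a ∈ 𝒜 n)
    -- `h` is homogeneous of degree `-1` and an `(i∘p, id)`-derivation
    (hhdeg : ∀ (n : ℤ), ∀ a ∈ 𝒜 n, h a ∈ 𝒜 (n - 1))
    (hhder : ∀ (n : ℤ), ∀ a ∈ 𝒜 n, ∀ b : M,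
      h (a * b) = h a * i (p b) + (((-1 : ℤˣ) ^ n : ℤˣ) : ℤ) • (a * h b)) :
    let S : M →ₗ[R] M := ∑ k ∈ Finset.range K, (x ∘ₗ h) ^ k
    let S' : M →ₗ[R] M := ∑ k ∈ Finset.range (K + 1), (h ∘ₗ x) ^ k
    let i' : N →ₗ[R] M := S' ∘ₗ i
    let p' : M →ₗ[R] N := p ∘ₗ S
    let h' : M →ₗ[R] M := h ∘ₗ S
    let dN' : N →ₗ[R] N := dN + p ∘ₗ S ∘ₗ x ∘ₗ i
    i' 1 = 1 ∧ ∀ a b : N, i' (a * b) = i' a * i' b := by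
  show perturbedInclusion h x i K 1 = 1 ∧ ∀ a b : N, perturbedInclusion h x i K (a * b) =
    perturbedInclusion h x i K a * perturbedInclusion h x i K b
  have hnil := pow_succ_comp_eq_zero hK
  refine ⟨perturbedInclusion_one hnil hxder hione, fun a b => ?_⟩
  induction a using DirectSum.Decomposition.inductionOn ℬ with
  | zero => simp
  | homogeneous a =>
    exact perturbedInclusion_mul_of_mem hnil hpi hhh hhi hph hxdeg hxder himul hideg hhdeg hhder
      a.2 b
  | add a₁ a₂ ih₁ ih₂ => simp only [add_mul, map_add, ih₁, ih₂]

theorem multiplicative_hpl_inclusion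
    {R : Type*} [CommRing R] {M N : Type*}
    [Ring M] [Algebra R M] [Ring N] [Algebra R N]
    (𝒜 : ℤ → Submodule R M) (ℬ : ℤ → Submodule R N)
    [GradedAlgebra 𝒜] [GradedAlgebra ℬ]
    (dM : M →ₗ[R] M) (dN : N →ₗ[R] N)
    (hdM : dM ∘ₗ dM = 0) (hdN : dN ∘ₗ dN = 0)
    (i : N →ₗ[R] M) (p : M →ₗ[R] N) (h : M →ₗ[R] M)
    (hdi : dM ∘ₗ i = i ∘ₗ dN) (hpd : p ∘ₗ dM = dN ∘ₗ p)
    (hpi : p ∘ₗ i = LinearMap.id)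
    (hhtp : LinearMap.id - i ∘ₗ p = dM ∘ₗ h + h ∘ₗ dM)
    (hhh : h ∘ₗ h = 0) (hhi : h ∘ₗ i = 0) (hph : p ∘ₗ h = 0)
    (x : M →ₗ[R] M) (hx : (dM + x) ∘ₗ (dM + x) = 0)
    (K : ℕ) (hK : (x ∘ₗ h) ^ K = 0)
    -- `d_M`, `d_N` and `x` are homogeneous of degree `+1` and graded derivations
    (hdMdeg : ∀ (n : ℤ), ∀ a ∈ 𝒜 n, dM a ∈ 𝒜 (n + 1))
    (hdMder : ∀ (n : ℤ), ∀ a ∈ 𝒜 n, ∀ b : M,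
      dM (a * b) = dM a * b + (((-1 : ℤˣ) ^ n : ℤˣ) : ℤ) • (a * dM b))
    (hdNdeg : ∀ (n : ℤ), ∀ a ∈ ℬ n, dN a ∈ ℬ (n + 1))
    (hdNder : ∀ (n : ℤ), ∀ a ∈ ℬ n, ∀ b : N,
      dN (a * b) = dN a * b + (((-1 : ℤˣ) ^ n : ℤˣ) : ℤ) • (a * dN b))
    (hxdeg : ∀ (n : ℤ), ∀ a ∈ 𝒜 n, x a ∈ 𝒜 (n + 1))
    (hxder : ∀ (n : ℤ), ∀ a ∈ 𝒜 n, ∀ b : M,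
      x (a * b) = x a * b + (((-1 : ℤˣ) ^ n : ℤˣ) : ℤ) • (a * x b))
    -- `i` and `p` are degree-0 unital algebra homomorphisms
    (hione : i 1 = 1) (himul : ∀ a b : N, i (a * b) = i a * i b)
    (hideg : ∀ (n : ℤ), ∀ a ∈ ℬ n, i a ∈ 𝒜 n)
    (hpone : p 1 = 1) (hpmul : ∀ a b : M, p (a * b) = p a * p b)
    (hpdeg : ∀ (n : ℤ), ∀ a ∈ 𝒜 n, p a ∈ ℬ n)
    -- `h` is homogeneous of degree `-1` and an `(i∘p, id)`-derivation
    (hhdeg : ∀ (n : ℤ), ∀ a ∈ 𝒜 n, h a ∈ 𝒜 (n - 1))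
    (hhder : ∀ (n : ℤ), ∀ a ∈ 𝒜 n, ∀ b : M,
      h (a * b) = h a * i (p b) + (((-1 : ℤˣ) ^ n : ℤˣ) : ℤ) • (a * h b)) :
    let S : M →ₗ[R] M := ∑ k ∈ Finset.range K, (x ∘ₗ h) ^ k
    let S' : M →ₗ[R] M := ∑ k ∈ Finset.range (K + 1), (h ∘ₗ x) ^ k
    let i' : N →ₗ[R] M := S' ∘ₗ i
    let p' : M →ₗ[R] N := p ∘ₗ S
    let h' : M →ₗ[R] M := h ∘ₗ S
    let dN' : N →ₗ[R] N := dN + p ∘ₗ S ∘ₗ x ∘ₗ i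
    i' 1 = 1 ∧ ∀ a b : N, i' (a * b) = i' a * i' b :=
  multiplicative_hpl_inclusion_general 𝒜 ℬ dN i p h hpi hhh hhi hph x K hK hxdeg hxder hione himul
    hideg hhdeg hhder
end

section
/- Multiplicative homological perturbation lemma, projection part: the perturbed projection p' := p ∘ Σ is a unital algebra homomorphism from M to N: p'(1) = 1 and p'(ab) = p'(a)·p'(b) for all a, b in M. -/
/-!
Write `e = x ∘ h`. Because `h` is an `(i ∘ p, id)`-derivation and `h ∘ h`, `h ∘ i`, `p ∘ h`
vanish, the maps `p ∘ e ^ k` obey the Leibniz rule `p (e^k (a b)) = ∑_{j+l=k} p (e^j a) p (e^l b)`: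
of the four terms of `e (a b)` only `e a · i (p b)` and `a · e b` survive under `p ∘ e ^ k`.
As `e` is nilpotent, `p' = ∑_k p ∘ e ^ k` is then multiplicative by the Cauchy product formula,
and `p' 1 = p 1 = 1` because `h 1 = 0`.
-/

open Finset

theorem sum_range_pow_of_pow_eq_zero {A : Type*} [Semiring A] {e : A} {K n : ℕ}
    (hK : e ^ K = 0) (hn : K ≤ n) : ∑ k ∈ range n, e ^ k = ∑ k ∈ range K, e ^ k :=
  (sum_subset (range_subset_range.mpr hn) fun k _ hk =>
    pow_eq_zero_of_le (by simpa using hk) hK).symm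

theorem sum_range_mul_sum_range_eq_sum_antidiagonal {A : Type*} [NonUnitalNonAssocSemiring A]
    {K : ℕ} {f g : ℕ → A} (hf : ∀ j, K ≤ j → f j = 0) (hg : ∀ l, K ≤ l → g l = 0) :
    (∑ j ∈ range K, f j) * (∑ l ∈ range K, g l) =
      ∑ k ∈ range (2 * K), ∑ jl ∈ antidiagonal k, f jl.1 * g jl.2 := by
  simp only [Nat.sum_antidiagonal_eq_sum_range_succ_mk, Nat.succ_eq_add_one]
  rw [sum_range_diag_flip _ fun j l => f j * g l, sum_mul_sum]
  symm
  calc ∑ j ∈ range (2 * K), ∑ l ∈ range (2 * K - j), f j * g l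
      = ∑ j ∈ range K, ∑ l ∈ range (2 * K - j), f j * g l :=
        (sum_subset (range_subset_range.mpr (by omega)) fun j _ hj => sum_eq_zero fun l _ => by
          rw [hf j (by simpa using hj), zero_mul]).symm
    _ = ∑ j ∈ range K, ∑ l ∈ range K, f j * g l :=
        sum_congr rfl fun j hj => (sum_subset (range_subset_range.mpr (by simp at hj; omega))
          fun l _ hl => by rw [hg l (by simpa using hl), mul_zero]).symm

section PerturbedProjection

variable {R M N : Type*} [Semiring R] [Ring M] [Module R M] [Ring N] [Module R N]
  {i : N →ₗ[R] M} {p : M →ₗ[R] N} {h x : M →ₗ[R] M}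

theorem map_pow_comp_apply_eq_zero (hph : p ∘ₗ h = 0) (hhh : h ∘ₗ h = 0) (k : ℕ) (v : M) :
    p (((x ∘ₗ h) ^ k) (h v)) = 0 := by
  cases k with
  | zero => exact LinearMap.congr_fun hph v
  | succ k =>
    rw [pow_succ, Module.End.mul_apply, LinearMap.comp_apply,
      show h (h v) = 0 from LinearMap.congr_fun hhh v, map_zero, map_zero, map_zero]

theorem pow_succ_comp_apply_eq_zero (hhi : h ∘ₗ i = 0) (k : ℕ) (v : N) :
    ((x ∘ₗ h) ^ (k + 1)) (i v) = 0 := by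
  rw [pow_succ, Module.End.mul_apply, LinearMap.comp_apply,
    show h (i v) = 0 from LinearMap.congr_fun hhi v, map_zero, map_zero]

variable (𝒜 : ℤ → Submodule R M)

theorem comp_apply_mul_of_mem
    (hxder : ∀ (n : ℤ), ∀ a ∈ 𝒜 n, ∀ b : M,
      x (a * b) = x a * b + (((-1 : ℤˣ) ^ n : ℤˣ) : ℤ) • (a * x b))
    (hhdeg : ∀ (n : ℤ), ∀ a ∈ 𝒜 n, h a ∈ 𝒜 (n - 1))
    (hhder : ∀ (n : ℤ), ∀ a ∈ 𝒜 n, ∀ b : M,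
      h (a * b) = h a * i (p b) + (((-1 : ℤˣ) ^ n : ℤˣ) : ℤ) • (a * h b))
    {n : ℤ} {a : M} (ha : a ∈ 𝒜 n) (b : M) :
    (x ∘ₗ h) (a * b) = (x ∘ₗ h) a * i (p b)
      + (((-1 : ℤˣ) ^ (n - 1) : ℤˣ) : ℤ) • (h a * x (i (p b)))
      + (((-1 : ℤˣ) ^ n : ℤˣ) : ℤ) • (x a * h b) + a * (x ∘ₗ h) b := by
  have hsign : (((-1 : ℤˣ) ^ n : ℤˣ) : ℤ) * (((-1 : ℤˣ) ^ n : ℤˣ) : ℤ) = 1 := by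
    rw [← Units.val_mul, Int.units_mul_self, Units.val_one]
  rw [LinearMap.comp_apply, hhder n a ha, map_add, hxder _ _ (hhdeg n a ha), map_zsmul,
    hxder n a ha, smul_add, smul_smul, hsign, one_smul]
  simp only [LinearMap.comp_apply]
  abel

theorem map_pow_comp_apply_mul [DirectSum.Decomposition 𝒜]
    (hpi : p ∘ₗ i = LinearMap.id) (hhh : h ∘ₗ h = 0) (hhi : h ∘ₗ i = 0) (hph : p ∘ₗ h = 0)
    (hxder : ∀ (n : ℤ), ∀ a ∈ 𝒜 n, ∀ b : M,
      x (a * b) = x a * b + (((-1 : ℤˣ) ^ n : ℤˣ) : ℤ) • (a * x b))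
    (hpmul : ∀ a b : M, p (a * b) = p a * p b)
    (hhdeg : ∀ (n : ℤ), ∀ a ∈ 𝒜 n, h a ∈ 𝒜 (n - 1))
    (hhder : ∀ (n : ℤ), ∀ a ∈ 𝒜 n, ∀ b : M,
      h (a * b) = h a * i (p b) + (((-1 : ℤˣ) ^ n : ℤˣ) : ℤ) • (a * h b))
    (k : ℕ) (a b : M) :
    p (((x ∘ₗ h) ^ k) (a * b)) =
      ∑ jl ∈ antidiagonal k, p (((x ∘ₗ h) ^ jl.1) a) * p (((x ∘ₗ h) ^ jl.2) b) := by
  induction k generalizing a b with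
  | zero => simpa using hpmul a b
  | succ k ih =>
    induction a using DirectSum.Decomposition.inductionOn 𝒜 with
    | zero => simp
    | add a a' ha ha' => simp only [add_mul, map_add, ha, ha', sum_add_distrib]
    | homogeneous a =>
      rw [pow_succ, Module.End.mul_apply, comp_apply_mul_of_mem 𝒜 hxder hhdeg hhder a.2]
      set e := x ∘ₗ h
      have hterm₁ : ∑ jl ∈ antidiagonal k, p ((e ^ jl.1) (e a)) * p ((e ^ jl.2) (i (p b)))
          = p ((e ^ (k + 1)) a) * p b := by
        rw [sum_eq_single_of_mem (k, 0) (HasAntidiagonal.mem_antidiagonal.mpr (add_zero k))]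
        · rw [pow_zero, Module.End.one_apply, show p (i (p b)) = p b from
            LinearMap.congr_fun hpi (p b), pow_succ, Module.End.mul_apply]
        · rintro ⟨j, l⟩ hjl hne
          obtain ⟨l, rfl⟩ : ∃ l', l = l' + 1 := Nat.exists_eq_add_one.mpr <| Nat.pos_of_ne_zero
            fun hl => hne (by simpa [hl] using HasAntidiagonal.mem_antidiagonal.mp hjl)
          rw [pow_succ_comp_apply_eq_zero hhi, map_zero, mul_zero]
      have hterm₂ : ∑ jl ∈ antidiagonal k, p ((e ^ jl.1) (h a)) * p ((e ^ jl.2) (x (i (p b))))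
          = 0 := sum_eq_zero fun jl _ => by rw [map_pow_comp_apply_eq_zero hph hhh, zero_mul]
      have hterm₃ : ∑ jl ∈ antidiagonal k, p ((e ^ jl.1) (x a)) * p ((e ^ jl.2) (h b))
          = 0 := sum_eq_zero fun jl _ => by rw [map_pow_comp_apply_eq_zero hph hhh, mul_zero]
      simp only [map_add, map_zsmul, ih]
      rw [hterm₁, hterm₂, hterm₃, smul_zero, smul_zero, add_zero, add_zero,
        Nat.sum_antidiagonal_succ']
      simp only [pow_succ, Module.End.mul_apply, pow_zero, Module.End.one_apply]

theorem map_one_eq_zero_of_derivation [SetLike.GradedOne 𝒜] (hione : i 1 = 1) (hpone : p 1 = 1)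
    (hhder : ∀ (n : ℤ), ∀ a ∈ 𝒜 n, ∀ b : M,
      h (a * b) = h a * i (p b) + (((-1 : ℤˣ) ^ n : ℤˣ) : ℤ) • (a * h b)) :
    h 1 = 0 := by
  simpa [hpone, hione] using hhder 0 1 SetLike.GradedOne.one_mem 1

end PerturbedProjection

theorem multiplicative_hpl_projection_general
    {R : Type*} [CommRing R] {M N : Type*}
    [Ring M] [Algebra R M] [Ring N] [Algebra R N]
    (𝒜 : ℤ → Submodule R M)
    [GradedAlgebra 𝒜]
    (dN : N →ₗ[R] N)
    (i : N →ₗ[R] M) (p : M →ₗ[R] N) (h : M →ₗ[R] M)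
    (hpi : p ∘ₗ i = LinearMap.id)
    (hhh : h ∘ₗ h = 0) (hhi : h ∘ₗ i = 0) (hph : p ∘ₗ h = 0)
    (x : M →ₗ[R] M)
    (K : ℕ) (hK : (x ∘ₗ h) ^ K = 0)
    -- `d_M`, `d_N` and `x` are homogeneous of degree `+1` and graded derivations
    (hxder : ∀ (n : ℤ), ∀ a ∈ 𝒜 n, ∀ b : M,
      x (a * b) = x a * b + (((-1 : ℤˣ) ^ n : ℤˣ) : ℤ) • (a * x b))
    -- `i` and `p` are degree-0 unital algebra homomorphisms
    (hione : i 1 = 1)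
    (hpone : p 1 = 1) (hpmul : ∀ a b : M, p (a * b) = p a * p b)
    -- `h` is homogeneous of degree `-1` and an `(i∘p, id)`-derivation
    (hhdeg : ∀ (n : ℤ), ∀ a ∈ 𝒜 n, h a ∈ 𝒜 (n - 1))
    (hhder : ∀ (n : ℤ), ∀ a ∈ 𝒜 n, ∀ b : M,
      h (a * b) = h a * i (p b) + (((-1 : ℤˣ) ^ n : ℤˣ) : ℤ) • (a * h b)) :
    let S : M →ₗ[R] M := ∑ k ∈ Finset.range K, (x ∘ₗ h) ^ k
    let S' : M →ₗ[R] M := ∑ k ∈ Finset.range (K + 1), (h ∘ₗ x) ^ k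
    let i' : N →ₗ[R] M := S' ∘ₗ i
    let p' : M →ₗ[R] N := p ∘ₗ S
    let h' : M →ₗ[R] M := h ∘ₗ S
    let dN' : N →ₗ[R] N := dN + p ∘ₗ S ∘ₗ x ∘ₗ i
    p' 1 = 1 ∧ ∀ a b : M, p' (a * b) = p' a * p' b := by
  intro S _ _ p' _ _
  have hp' : ∀ n, K ≤ n → ∀ v, p (S v) = ∑ k ∈ range n, p (((x ∘ₗ h) ^ k) v) := fun n hn v => by
    show p ((∑ k ∈ range K, (x ∘ₗ h) ^ k) v) = _
    rw [← sum_range_pow_of_pow_eq_zero hK hn, LinearMap.sum_apply, map_sum]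
  have hvanish : ∀ v j, K ≤ j → p (((x ∘ₗ h) ^ j) v) = 0 := fun v j hj => by
    rw [pow_eq_zero_of_le hj hK, LinearMap.zero_apply, map_zero]
  refine ⟨?_, fun a b => ?_⟩
  · show p (S 1) = 1
    have hh1 : h 1 = 0 := map_one_eq_zero_of_derivation 𝒜 hione hpone hhder
    rw [hp' (K + 1) K.le_succ, sum_range_succ']
    simp [pow_succ, hh1, hpone]
  · show p (S (a * b)) = p (S a) * p (S b)
    rw [hp' (2 * K) (by omega), hp' K le_rfl, hp' K le_rfl]
    simp only [map_pow_comp_apply_mul 𝒜 hpi hhh hhi hph hxder hpmul hhdeg hhder]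
    exact (sum_range_mul_sum_range_eq_sum_antidiagonal (hvanish a) (hvanish b)).symm

theorem multiplicative_hpl_projection
    {R : Type*} [CommRing R] {M N : Type*}
    [Ring M] [Algebra R M] [Ring N] [Algebra R N]
    (𝒜 : ℤ → Submodule R M) (ℬ : ℤ → Submodule R N)
    [GradedAlgebra 𝒜] [GradedAlgebra ℬ]
    (dM : M →ₗ[R] M) (dN : N →ₗ[R] N)
    (hdM : dM ∘ₗ dM = 0) (hdN : dN ∘ₗ dN = 0)
    (i : N →ₗ[R] M) (p : M →ₗ[R] N) (h : M →ₗ[R] M)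
    (hdi : dM ∘ₗ i = i ∘ₗ dN) (hpd : p ∘ₗ dM = dN ∘ₗ p)
    (hpi : p ∘ₗ i = LinearMap.id)
    (hhtp : LinearMap.id - i ∘ₗ p = dM ∘ₗ h + h ∘ₗ dM)
    (hhh : h ∘ₗ h = 0) (hhi : h ∘ₗ i = 0) (hph : p ∘ₗ h = 0)
    (x : M →ₗ[R] M) (hx : (dM + x) ∘ₗ (dM + x) = 0)
    (K : ℕ) (hK : (x ∘ₗ h) ^ K = 0)
    -- `d_M`, `d_N` and `x` are homogeneous of degree `+1` and graded derivations
    (hdMdeg : ∀ (n : ℤ), ∀ a ∈ 𝒜 n, dM a ∈ 𝒜 (n + 1))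
    (hdMder : ∀ (n : ℤ), ∀ a ∈ 𝒜 n, ∀ b : M,
      dM (a * b) = dM a * b + (((-1 : ℤˣ) ^ n : ℤˣ) : ℤ) • (a * dM b))
    (hdNdeg : ∀ (n : ℤ), ∀ a ∈ ℬ n, dN a ∈ ℬ (n + 1))
    (hdNder : ∀ (n : ℤ), ∀ a ∈ ℬ n, ∀ b : N,
      dN (a * b) = dN a * b + (((-1 : ℤˣ) ^ n : ℤˣ) : ℤ) • (a * dN b))
    (hxdeg : ∀ (n : ℤ), ∀ a ∈ 𝒜 n, x a ∈ 𝒜 (n + 1))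
    (hxder : ∀ (n : ℤ), ∀ a ∈ 𝒜 n, ∀ b : M,
      x (a * b) = x a * b + (((-1 : ℤˣ) ^ n : ℤˣ) : ℤ) • (a * x b))
    -- `i` and `p` are degree-0 unital algebra homomorphisms
    (hione : i 1 = 1) (himul : ∀ a b : N, i (a * b) = i a * i b)
    (hideg : ∀ (n : ℤ), ∀ a ∈ ℬ n, i a ∈ 𝒜 n)
    (hpone : p 1 = 1) (hpmul : ∀ a b : M, p (a * b) = p a * p b)
    (hpdeg : ∀ (n : ℤ), ∀ a ∈ 𝒜 n, p a ∈ ℬ n)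
    -- `h` is homogeneous of degree `-1` and an `(i∘p, id)`-derivation
    (hhdeg : ∀ (n : ℤ), ∀ a ∈ 𝒜 n, h a ∈ 𝒜 (n - 1))
    (hhder : ∀ (n : ℤ), ∀ a ∈ 𝒜 n, ∀ b : M,
      h (a * b) = h a * i (p b) + (((-1 : ℤˣ) ^ n : ℤˣ) : ℤ) • (a * h b)) :
    let S : M →ₗ[R] M := ∑ k ∈ Finset.range K, (x ∘ₗ h) ^ k
    let S' : M →ₗ[R] M := ∑ k ∈ Finset.range (K + 1), (h ∘ₗ x) ^ k
    let i' : N →ₗ[R] M := S' ∘ₗ i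
    let p' : M →ₗ[R] N := p ∘ₗ S
    let h' : M →ₗ[R] M := h ∘ₗ S
    let dN' : N →ₗ[R] N := dN + p ∘ₗ S ∘ₗ x ∘ₗ i
    p' 1 = 1 ∧ ∀ a b : M, p' (a * b) = p' a * p' b :=
  multiplicative_hpl_projection_general 𝒜 dN i p h hpi hhh hhi hph x K hK hxder hione hpone hpmul
    hhdeg hhder
end

section
/- Multiplicative homological perturbation lemma, homotopy part: the perturbed homotopy h' := h ∘ Σ is an (i'∘p', id)-derivation, i.e. h'(ab) = h'(a)·(i'∘p')(b) + (−1)^{|a|} a·h'(b) for all homogeneous a and all b in M. -/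
lemma hpl_shuffle {R M : Type*} [CommRing R] [AddCommGroup M] [Module R M]
    (u v : M →ₗ[R] M) (k : ℕ) :
    u ∘ₗ ((v ∘ₗ u) ^ k) = ((u ∘ₗ v) ^ k) ∘ₗ u := by
  rw [← Module.End.mul_eq_comp, ← Module.End.mul_eq_comp, ← Module.End.mul_eq_comp,
    ← Module.End.mul_eq_comp]
  exact SemiconjBy.pow_right (by simp [SemiconjBy, mul_assoc]) k

lemma hpl_tri {β : Type*} [AddCommMonoid β] (f : ℕ → ℕ → β) :
    ∀ T : ℕ, ∑ k ∈ Finset.range T, ∑ j ∈ Finset.range (k + 1), f j (k - j)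
      = ∑ j ∈ Finset.range T, ∑ m ∈ Finset.range (T - j), f j m := by
  intro T
  induction T with
  | zero => simp
  | succ T ih =>
    rw [Finset.sum_range_succ, ih]
    have e1 : ∀ j ∈ Finset.range T, ∑ m ∈ Finset.range (T + 1 - j), f j m
        = ∑ m ∈ Finset.range (T - j), f j m + f j (T - j) := by
      intro j hj
      have : T + 1 - j = (T - j) + 1 := by
        simp only [Finset.mem_range] at hj; omega
      rw [this, Finset.sum_range_succ]
    rw [Finset.sum_range_succ (fun j => ∑ m ∈ Finset.range (T + 1 - j), f j m) T,
      Finset.sum_congr rfl e1, Finset.sum_add_distrib,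
      Finset.sum_range_succ (fun j => f j (T - j)) T]
    simp only [Nat.sub_self, Nat.add_sub_cancel_left]
    rw [Finset.sum_range_one]
    abel

theorem multiplicative_hpl_homotopy
    {R : Type*} [CommRing R] {M N : Type*}
    [Ring M] [Algebra R M] [Ring N] [Algebra R N]
    (𝒜 : ℤ → Submodule R M) (ℬ : ℤ → Submodule R N)
    [GradedAlgebra 𝒜] [GradedAlgebra ℬ]
    (dM : M →ₗ[R] M) (dN : N →ₗ[R] N)
    (hdM : dM ∘ₗ dM = 0) (hdN : dN ∘ₗ dN = 0)
    (i : N →ₗ[R] M) (p : M →ₗ[R] N) (h : M →ₗ[R] M)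
    (hdi : dM ∘ₗ i = i ∘ₗ dN) (hpd : p ∘ₗ dM = dN ∘ₗ p)
    (hpi : p ∘ₗ i = LinearMap.id)
    (hhtp : LinearMap.id - i ∘ₗ p = dM ∘ₗ h + h ∘ₗ dM)
    (hhh : h ∘ₗ h = 0) (hhi : h ∘ₗ i = 0) (hph : p ∘ₗ h = 0)
    (x : M →ₗ[R] M) (hx : (dM + x) ∘ₗ (dM + x) = 0)
    (K : ℕ) (hK : (x ∘ₗ h) ^ K = 0)
    -- `d_M`, `d_N` and `x` are homogeneous of degree `+1` and graded derivations
    (hdMdeg : ∀ (n : ℤ), ∀ a ∈ 𝒜 n, dM a ∈ 𝒜 (n + 1))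
    (hdMder : ∀ (n : ℤ), ∀ a ∈ 𝒜 n, ∀ b : M,
      dM (a * b) = dM a * b + (((-1 : ℤˣ) ^ n : ℤˣ) : ℤ) • (a * dM b))
    (hdNdeg : ∀ (n : ℤ), ∀ a ∈ ℬ n, dN a ∈ ℬ (n + 1))
    (hdNder : ∀ (n : ℤ), ∀ a ∈ ℬ n, ∀ b : N,
      dN (a * b) = dN a * b + (((-1 : ℤˣ) ^ n : ℤˣ) : ℤ) • (a * dN b))
    (hxdeg : ∀ (n : ℤ), ∀ a ∈ 𝒜 n, x a ∈ 𝒜 (n + 1))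
    (hxder : ∀ (n : ℤ), ∀ a ∈ 𝒜 n, ∀ b : M,
      x (a * b) = x a * b + (((-1 : ℤˣ) ^ n : ℤˣ) : ℤ) • (a * x b))
    -- `i` and `p` are degree-0 unital algebra homomorphisms
    (hione : i 1 = 1) (himul : ∀ a b : N, i (a * b) = i a * i b)
    (hideg : ∀ (n : ℤ), ∀ a ∈ ℬ n, i a ∈ 𝒜 n)
    (hpone : p 1 = 1) (hpmul : ∀ a b : M, p (a * b) = p a * p b)
    (hpdeg : ∀ (n : ℤ), ∀ a ∈ 𝒜 n, p a ∈ ℬ n)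
    -- `h` is homogeneous of degree `-1` and an `(i∘p, id)`-derivation
    (hhdeg : ∀ (n : ℤ), ∀ a ∈ 𝒜 n, h a ∈ 𝒜 (n - 1))
    (hhder : ∀ (n : ℤ), ∀ a ∈ 𝒜 n, ∀ b : M,
      h (a * b) = h a * i (p b) + (((-1 : ℤˣ) ^ n : ℤˣ) : ℤ) • (a * h b)) :
    let S : M →ₗ[R] M := ∑ k ∈ Finset.range K, (x ∘ₗ h) ^ k
    let S' : M →ₗ[R] M := ∑ k ∈ Finset.range (K + 1), (h ∘ₗ x) ^ k
    let i' : N →ₗ[R] M := S' ∘ₗ i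
    let p' : M →ₗ[R] N := p ∘ₗ S
    let h' : M →ₗ[R] M := h ∘ₗ S
    let dN' : N →ₗ[R] N := dN + p ∘ₗ S ∘ₗ x ∘ₗ i
    ∀ (n : ℤ), ∀ a ∈ 𝒜 n, ∀ b : M,
      h' (a * b) = h' a * i' (p' b) + (((-1 : ℤˣ) ^ n : ℤˣ) : ℤ) • (a * h' b) := by
  intro S S' i' p' h' dN' n a ha b
  have hS : S = ∑ k ∈ Finset.range K, (x ∘ₗ h) ^ k := rfl
  have hS' : S' = ∑ k ∈ Finset.range (K + 1), (h ∘ₗ x) ^ k := rfl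
  show h (S (a * b)) = h (S a) * S' (i (p (S b)))
      + (((-1 : ℤˣ) ^ n : ℤˣ) : ℤ) • (a * h (S b))
  rcases Nat.eq_zero_or_pos K with hK0 | hKpos
  · have hS0 : S = 0 := by rw [hS, hK0]; simp
    simp [hS0]
  -- abbreviations (as plain terms, repeated everywhere)
  -- sign facts
  have epsqm : ∀ m : ℤ, (((-1 : ℤˣ) ^ m : ℤˣ) : ℤ) * (((-1 : ℤˣ) ^ m : ℤˣ) : ℤ) = 1 := by
    intro m; rw [← Units.val_mul, Int.units_mul_self, Units.val_one]
  -- elementwise composition facts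
  have Asucc : ∀ (j : ℕ) (w : M), ((h ∘ₗ x) ^ (j + 1)) w = h (x (((h ∘ₗ x) ^ j) w)) := by
    intro j w; rw [pow_succ']; rfl
  have shE : ∀ (k : ℕ) (w : M), h (((x ∘ₗ h) ^ k) w) = ((h ∘ₗ x) ^ k) (h w) := by
    intro k w; exact LinearMap.congr_fun (hpl_shuffle h x k) w
  have xA : ∀ (k : ℕ) (w : M), x (((h ∘ₗ x) ^ k) (h w)) = ((x ∘ₗ h) ^ (k + 1)) w := by
    intro k w
    have h1 := LinearMap.congr_fun (hpl_shuffle x h k) (h w)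
    rw [pow_succ]
    exact h1.trans rfl
  -- vanishing facts
  have piz : ∀ w : N, p (i w) = w := fun w => LinearMap.congr_fun hpi w
  have hEz : ∀ w : M, h (i (p w)) = 0 := fun w => LinearMap.congr_fun hhi (p w)
  have pHz : ∀ w : M, p (h w) = 0 := fun w => LinearMap.congr_fun hph w
  have hhz : ∀ w : M, h (h w) = 0 := fun w => LinearMap.congr_fun hhh w
  have xhz : ∀ (k : ℕ), K ≤ k → ∀ w : M, ((x ∘ₗ h) ^ k) w = 0 := by
    intro k hk w
    have e : (x ∘ₗ h) ^ k = (x ∘ₗ h) ^ (k - K) * (x ∘ₗ h) ^ K := by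
      rw [← pow_add]; congr 1; omega
    rw [e, Module.End.mul_apply, hK]; simp
  have Az : ∀ (j : ℕ), K ≤ j → ∀ w : M, ((h ∘ₗ x) ^ j) (h w) = 0 := by
    intro j hj w
    rw [← shE j w, xhz j hj w, map_zero]
  have hxz : ∀ (k : ℕ), K + 1 ≤ k → ∀ w : M, ((h ∘ₗ x) ^ k) w = 0 := by
    intro k hk w
    have e : (h ∘ₗ x) ^ k = (h ∘ₗ x) ^ (k - (K + 1)) * (h ∘ₗ x) ^ (K + 1) := by
      rw [← pow_add]; congr 1; omega
    have e2 : ((h ∘ₗ x) ^ (K + 1)) w = 0 := by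
      rw [pow_succ, Module.End.mul_apply]
      exact Az K le_rfl (x w)
    rw [e, Module.End.mul_apply, e2, map_zero]
  -- degree facts
  have degA : ∀ (j : ℕ) (m : ℤ), ∀ z ∈ 𝒜 m, ((h ∘ₗ x) ^ j) z ∈ 𝒜 m := by
    intro j
    induction j with
    | zero => intro m z hz; simpa using hz
    | succ j ih =>
      intro m z hz
      rw [Asucc j z]
      have := hhdeg (m + 1) _ (hxdeg m _ (ih m z hz))
      simpa using this
  have degAa : ∀ j : ℕ, ((h ∘ₗ x) ^ j) (h a) ∈ 𝒜 (n - 1) :=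
    fun j => degA j (n - 1) _ (hhdeg n a ha)
  have degxAa : ∀ j : ℕ, x (((h ∘ₗ x) ^ j) (h a)) ∈ 𝒜 n := by
    intro j
    have := hxdeg (n - 1) _ (degAa j)
    simpa using this
  have degxa : x a ∈ 𝒜 (n + 1) := hxdeg n a ha
  -- the perturbed correction operators C m = ∑_{p+q=m} (hx)^p ∘ (i∘p) ∘ (xh)^q
  set Cf : ℕ → M → M :=
    fun m w => ∑ q ∈ Finset.range (m + 1),
      ((h ∘ₗ x) ^ q) (i (p (((x ∘ₗ h) ^ (m - q)) w))) with hCf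
  have hA : ∀ (j : ℕ) (z : M), h (((h ∘ₗ x) ^ j) (h z)) = 0 := by
    intro j z
    rw [← shE j z, hhz]
  have EA : ∀ (j : ℕ) (z : M), i (p (((h ∘ₗ x) ^ j) (h z))) = 0 := by
    intro j z
    rw [← shE j z, pHz, map_zero]
  have hHX : ∀ (q : ℕ) (w : M), h (((h ∘ₗ x) ^ (q + 1)) w) = 0 := by
    intro q w
    rw [Asucc q w, hhz]
  have pHX : ∀ (q : ℕ) (w : M), p (((h ∘ₗ x) ^ (q + 1)) w) = 0 := by
    intro q w
    rw [Asucc q w, pHz]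
  have hCzero : ∀ (m : ℕ) (w : M), h (Cf m w) = 0 := by
    intro m w
    rw [hCf]
    simp only [map_sum]
    apply Finset.sum_eq_zero
    intro q _
    match q with
    | 0 => simpa using hEz _
    | q + 1 => exact hHX q _
  have ECf : ∀ (m : ℕ) (w : M), i (p (Cf m w)) = i (p (((x ∘ₗ h) ^ m) w)) := by
    intro m w
    have e : p (Cf m w) = p (((x ∘ₗ h) ^ m) w) := by
      rw [hCf]
      simp only [map_sum]
      rw [Finset.sum_eq_single 0]
      · simp [piz]
      · intro q hq hq0
        match q with
        | 0 => exact absurd rfl hq0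
        | q + 1 => exact pHX q _
      · intro h0
        exact absurd (Finset.mem_range.mpr (Nat.succ_pos m)) h0
    rw [e]
  have Crec : ∀ (m : ℕ) (w : M),
      Cf (m + 1) w = i (p (((x ∘ₗ h) ^ (m + 1)) w)) + h (x (Cf m w)) := by
    intro m w
    rw [hCf]
    simp only []
    rw [Finset.sum_range_succ']
    have e1 : ∀ q ∈ Finset.range (m + 1),
        ((h ∘ₗ x) ^ (q + 1)) (i (p (((x ∘ₗ h) ^ (m + 1 - (q + 1))) w)))
        = h (x (((h ∘ₗ x) ^ q) (i (p (((x ∘ₗ h) ^ (m - q)) w))))) := by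
      intro q _
      rw [Nat.succ_sub_succ, Asucc]
    rw [Finset.sum_congr rfl e1, ← map_sum h, ← map_sum x]
    simp only [pow_zero, Module.End.one_apply, Nat.sub_zero]
    rw [add_comm]
  -- main inductive claim
  have ML : ∀ k : ℕ,
      ((h ∘ₗ x) ^ k) (h (a * b))
        = (∑ j ∈ Finset.range (k + 1), ((h ∘ₗ x) ^ j) (h a) * Cf (k - j) b)
          + (((-1 : ℤˣ) ^ n : ℤˣ) : ℤ) • (a * ((h ∘ₗ x) ^ k) (h b)) := by
    intro k
    induction k with
    | zero =>
      simp only [pow_zero, Module.End.one_apply, Finset.sum_range_one, Nat.sub_zero, hCf]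
      simpa using hhder n a ha b
    | succ k ih =>
      have key : ∀ j ∈ Finset.range (k + 1),
          h (x (((h ∘ₗ x) ^ j) (h a) * Cf (k - j) b))
          = ((h ∘ₗ x) ^ (j + 1)) (h a) * i (p (((x ∘ₗ h) ^ (k - j)) b))
            + ((h ∘ₗ x) ^ j) (h a) * h (x (Cf (k - j) b)) := by
        intro j _
        rw [hxder (n - 1) _ (degAa j) (Cf (k - j) b), map_add, map_zsmul,
          hhder n _ (degxAa j) (Cf (k - j) b),
          hhder (n - 1) _ (degAa j) (x (Cf (k - j) b)),
          hCzero (k - j) b, hA j a, ECf (k - j) b, ← Asucc j (h a)]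
        simp only [mul_zero, smul_zero, add_zero, zero_mul, zero_add, smul_smul,
          epsqm (n - 1), one_smul]
      have tail : (((-1 : ℤˣ) ^ n : ℤˣ) : ℤ) • h (x (a * ((h ∘ₗ x) ^ k) (h b)))
          = h a * i (p (((x ∘ₗ h) ^ (k + 1)) b))
            + (((-1 : ℤˣ) ^ n : ℤˣ) : ℤ) • (a * ((h ∘ₗ x) ^ (k + 1)) (h b)) := by
        rw [hxder n a ha (((h ∘ₗ x) ^ k) (h b)), map_add, map_zsmul,
          hhder (n + 1) _ degxa (((h ∘ₗ x) ^ k) (h b)),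
          hhder n a ha (x (((h ∘ₗ x) ^ k) (h b))),
          EA k b, hA k b, xA k b, shE (k + 1) b]
        simp only [mul_zero, smul_zero, add_zero, zero_add, smul_add, smul_smul,
          epsqm n, one_smul]
      rw [Asucc k (h (a * b)), ih, map_add, map_add, map_sum, map_sum, map_zsmul, map_zsmul,
        Finset.sum_congr rfl key, tail]
      -- now pure additive bookkeeping
      have R2 : ∑ j ∈ Finset.range (k + 1 + 1), ((h ∘ₗ x) ^ j) (h a) * Cf (k + 1 - j) b
          = ∑ j ∈ Finset.range (k + 1 + 1),
              ((h ∘ₗ x) ^ j) (h a) * i (p (((x ∘ₗ h) ^ (k + 1 - j)) b))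
            + ∑ j ∈ Finset.range (k + 1), ((h ∘ₗ x) ^ j) (h a) * h (x (Cf (k - j) b)) := by
        rw [Finset.sum_range_succ
          (fun j => ((h ∘ₗ x) ^ j) (h a) * Cf (k + 1 - j) b) (k + 1)]
        have inner : ∀ j ∈ Finset.range (k + 1),
            ((h ∘ₗ x) ^ j) (h a) * Cf (k + 1 - j) b
            = ((h ∘ₗ x) ^ j) (h a) * i (p (((x ∘ₗ h) ^ (k + 1 - j)) b))
              + ((h ∘ₗ x) ^ j) (h a) * h (x (Cf (k - j) b)) := by
          intro j hj
          have hj' : k + 1 - j = (k - j) + 1 := by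
            simp only [Finset.mem_range] at hj; omega
          rw [hj', Crec (k - j) b, mul_add]
        rw [Finset.sum_congr rfl inner, Finset.sum_add_distrib,
          Finset.sum_range_succ
            (fun j => ((h ∘ₗ x) ^ j) (h a) * i (p (((x ∘ₗ h) ^ (k + 1 - j)) b))) (k + 1)]
        have e0 : ((h ∘ₗ x) ^ (k + 1)) (h a) * Cf (k + 1 - (k + 1)) b
            = ((h ∘ₗ x) ^ (k + 1)) (h a) * i (p (((x ∘ₗ h) ^ (k + 1 - (k + 1))) b)) := by
          simp [hCf]
        rw [e0]
        abel
      have L3 : ∑ j ∈ Finset.range (k + 1),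
            ((h ∘ₗ x) ^ (j + 1)) (h a) * i (p (((x ∘ₗ h) ^ (k - j)) b))
          + h a * i (p (((x ∘ₗ h) ^ (k + 1)) b))
          = ∑ j ∈ Finset.range (k + 1 + 1),
              ((h ∘ₗ x) ^ j) (h a) * i (p (((x ∘ₗ h) ^ (k + 1 - j)) b)) := by
        rw [Finset.sum_range_succ'
          (fun j => ((h ∘ₗ x) ^ j) (h a) * i (p (((x ∘ₗ h) ^ (k + 1 - j)) b))) (k + 1)]
        simp only [Nat.succ_sub_succ, pow_zero, Module.End.one_apply, Nat.sub_zero]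
      rw [R2, Finset.sum_add_distrib, ← L3]
      abel
  -- assembly
  have hSw : ∀ w : M, h (S w) = ∑ k ∈ Finset.range K, ((h ∘ₗ x) ^ k) (h w) := by
    intro w
    rw [hS, LinearMap.sum_apply, map_sum]
    exact Finset.sum_congr rfl fun k _ => shE k w
  have Cz : ∀ m : ℕ, 2 * K ≤ m → ∀ w : M, Cf m w = 0 := by
    intro m hm w
    rw [hCf]
    apply Finset.sum_eq_zero
    intro q hq
    by_cases hq2 : K ≤ m - q
    · rw [xhz _ hq2 w]; simp
    · have hq3 : K + 1 ≤ q := by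
        simp only [Finset.mem_range] at hq; omega
      exact hxz q hq3 _
  have ext1 : ∀ w : M, ∑ k ∈ Finset.range K, ((h ∘ₗ x) ^ k) (h w)
      = ∑ k ∈ Finset.range (3 * K), ((h ∘ₗ x) ^ k) (h w) := by
    intro w
    apply Finset.sum_subset (Finset.range_subset_range.mpr (by omega))
    intro k _ hk
    exact Az k (by simp only [Finset.mem_range, not_lt] at hk; exact hk) w
  have SES : S' (i (p (S b))) = ∑ m ∈ Finset.range (2 * K), Cf m b := by
    have lhs1 : S' (i (p (S b))) = ∑ q' ∈ Finset.range (K + 1), ∑ q ∈ Finset.range K,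
        ((h ∘ₗ x) ^ q') (i (p (((x ∘ₗ h) ^ q) b))) := by
      simp only [hS, hS', LinearMap.sum_apply, map_sum]
      rw [Finset.sum_comm]
    have rhs1 : ∑ m ∈ Finset.range (2 * K), Cf m b
        = ∑ q' ∈ Finset.range (2 * K), ∑ m ∈ Finset.range (2 * K - q'),
            ((h ∘ₗ x) ^ q') (i (p (((x ∘ₗ h) ^ m) b))) := by
      simp only [hCf]
      exact hpl_tri (fun q m => ((h ∘ₗ x) ^ q) (i (p (((x ∘ₗ h) ^ m) b)))) (2 * K)
    have red : ∑ q' ∈ Finset.range (K + 1), ∑ q ∈ Finset.range K,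
            ((h ∘ₗ x) ^ q') (i (p (((x ∘ₗ h) ^ q) b)))
        = ∑ q' ∈ Finset.range (2 * K), ∑ m ∈ Finset.range (2 * K - q'),
            ((h ∘ₗ x) ^ q') (i (p (((x ∘ₗ h) ^ m) b))) := by
      have step1 : ∀ q' ∈ Finset.range (K + 1),
          ∑ q ∈ Finset.range K, ((h ∘ₗ x) ^ q') (i (p (((x ∘ₗ h) ^ q) b)))
          = ∑ m ∈ Finset.range (2 * K - q'), ((h ∘ₗ x) ^ q') (i (p (((x ∘ₗ h) ^ m) b))) := by
        intro q' hq'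
        apply Finset.sum_subset
        · apply Finset.range_subset_range.mpr
          simp only [Finset.mem_range] at hq'; omega
        · intro m _ hm
          rw [xhz m (by simp only [Finset.mem_range, not_lt] at hm; exact hm) b]
          simp
      rw [Finset.sum_congr rfl step1]
      apply Finset.sum_subset (Finset.range_subset_range.mpr (by omega))
      intro q' _ hq'
      apply Finset.sum_eq_zero
      intro m _
      exact hxz q' (by simp only [Finset.mem_range, not_lt] at hq'; exact hq') _
    rw [lhs1, red]
    exact rhs1.symm
  have main : h (S (a * b))
      = ∑ j ∈ Finset.range K, ∑ m ∈ Finset.range (2 * K),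
          ((h ∘ₗ x) ^ j) (h a) * Cf m b
        + (((-1 : ℤˣ) ^ n : ℤˣ) : ℤ) • (a * h (S b)) := by
    rw [hSw (a * b), ext1 (a * b), Finset.sum_congr rfl (fun k _ => ML k),
      Finset.sum_add_distrib]
    congr 1
    · rw [hpl_tri (fun j m => ((h ∘ₗ x) ^ j) (h a) * Cf m b) (3 * K)]
      have stepA : ∀ j ∈ Finset.range K,
          ∑ m ∈ Finset.range (2 * K), ((h ∘ₗ x) ^ j) (h a) * Cf m b
          = ∑ m ∈ Finset.range (3 * K - j), ((h ∘ₗ x) ^ j) (h a) * Cf m b := by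
        intro j hj
        apply Finset.sum_subset
          (Finset.range_subset_range.mpr (by simp only [Finset.mem_range] at hj; omega))
        intro m _ hm
        rw [Cz m (by simp only [Finset.mem_range, not_lt] at hm; exact hm) b, mul_zero]
      symm
      rw [Finset.sum_congr rfl stepA]
      apply Finset.sum_subset (Finset.range_subset_range.mpr (by omega))
      intro j _ hj
      apply Finset.sum_eq_zero
      intro m _
      rw [Az j (by simp only [Finset.mem_range, not_lt] at hj; exact hj) a, zero_mul]
    · rw [← Finset.smul_sum, ← Finset.mul_sum, ← ext1 b, ← hSw b]
  rw [main]
  congr 1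
  rw [hSw a, SES, Finset.sum_mul]
  exact Finset.sum_congr rfl fun j _ => (Finset.mul_sum _ _ _).symm
end

section
/- Simplification of the perturbed data in the presence of a weight filtration: if the range of h is contained in W, x(W) ⊆ W, and p vanishes on W, then the perturbed projection and differential of the homological perturbation lemma simplify to p' = p and d_N' = d_N + p ∘ x ∘ i; in particular (d_N + p ∘ x ∘ i) ∘ (d_N + p ∘ x ∘ i) = 0. -/
/-- Simplification of the perturbed data in the presence of a weight filtration:
if the range of `h` is contained in `W`, `x(W) ⊆ W`, and `p` vanishes on `W`, then
`p' = p` and `d_N' = d_N + p ∘ x ∘ i`; in particular the latter squares to zero. -/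
theorem perturbed_data_simplification
    {R : Type*} [CommRing R] {M N : Type*}
    [AddCommGroup M] [Module R M] [AddCommGroup N] [Module R N]
    (dM : M →ₗ[R] M) (dN : N →ₗ[R] N)
    (hdM : dM ∘ₗ dM = 0) (hdN : dN ∘ₗ dN = 0)
    (i : N →ₗ[R] M) (p : M →ₗ[R] N) (h : M →ₗ[R] M)
    (hdi : dM ∘ₗ i = i ∘ₗ dN) (hpd : p ∘ₗ dM = dN ∘ₗ p)
    (hpi : p ∘ₗ i = LinearMap.id)
    (hhtp : LinearMap.id - i ∘ₗ p = dM ∘ₗ h + h ∘ₗ dM)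
    (hhh : h ∘ₗ h = 0) (hhi : h ∘ₗ i = 0) (hph : p ∘ₗ h = 0)
    (x : M →ₗ[R] M) (hx : (dM + x) ∘ₗ (dM + x) = 0)
    (K : ℕ) (hK : (x ∘ₗ h) ^ K = 0)
    (W : Submodule R M)
    (hran : LinearMap.range h ≤ W)
    (hxW : ∀ w ∈ W, x w ∈ W)
    (hker : W ≤ LinearMap.ker p) :
    let S : M →ₗ[R] M := ∑ k ∈ Finset.range K, (x ∘ₗ h) ^ k
    let p' : M →ₗ[R] N := p ∘ₗ S
    let dN' : N →ₗ[R] N := dN + p ∘ₗ S ∘ₗ x ∘ₗ i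
    p' = p ∧ dN' = dN + p ∘ₗ x ∘ₗ i ∧
    (dN + p ∘ₗ x ∘ₗ i) ∘ₗ (dN + p ∘ₗ x ∘ₗ i) = 0 := by
  intro S p' dN'
  have hpW : ∀ m ∈ W, p m = 0 := fun m hm => hker hm
  have hxh : ∀ m, x (h m) ∈ W := fun m => hxW _ (hran ⟨m, rfl⟩)
  have pxh : ∀ m, p (x (h m)) = 0 := fun m => hpW _ (hxh m)
  have pxxh : ∀ m, p (x (x (h m))) = 0 := fun m => hpW _ (hxW _ (hxh m))
  have hdM' : ∀ m, dM (dM m) = 0 := fun m => by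
    simpa using LinearMap.ext_iff.mp hdM m
  have hpd' : ∀ m, p (dM m) = dN (p m) := fun m => by
    simpa using LinearMap.ext_iff.mp hpd m
  have hdi' : ∀ n, dM (i n) = i (dN n) := fun n => by
    simpa using LinearMap.ext_iff.mp hdi n
  have hhtp' : ∀ m, m - i (p m) = dM (h m) + h (dM m) := fun m => by
    simpa using LinearMap.ext_iff.mp hhtp m
  have hx' : ∀ m, dM (x m) + x (dM m) + x (x m) = 0 := fun m => by
    have := LinearMap.ext_iff.mp hx m
    simp only [LinearMap.comp_apply, LinearMap.add_apply, LinearMap.zero_apply,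
      map_add] at this
    rw [hdM' m] at this
    abel_nf at this ⊢
    linear_combination (norm := abel) this
  -- p ∘ S = p
  have hpS : p ∘ₗ S = p := by
    have hz : ∀ k : ℕ, p ∘ₗ (x ∘ₗ h) ^ (k + 1) = 0 := by
      intro k
      ext m
      rw [pow_succ']
      simpa using pxh (((x ∘ₗ h) ^ k) m)
    cases K with
    | zero =>
      have h1 : (1 : M →ₗ[R] M) = 0 := by simpa using hK
      have : p = 0 := by
        calc p = p ∘ₗ (1 : M →ₗ[R] M) := rfl
        _ = p ∘ₗ 0 := by rw [h1]
        _ = 0 := by ext m; simp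
      simp [S, this]
    | succ K =>
      show (p ∘ₗ ∑ k ∈ Finset.range (K + 1), (x ∘ₗ h) ^ k) = p
      ext m
      rw [Finset.sum_range_succ']
      simp only [LinearMap.comp_apply, LinearMap.add_apply, LinearMap.sum_apply, map_add,
        map_sum, pow_zero, Module.End.one_apply]
      have : ∀ k ∈ Finset.range K, p (((x ∘ₗ h) ^ (k + 1)) m) = 0 := fun k _ => by
        simpa using LinearMap.ext_iff.mp (hz k) m
      rw [Finset.sum_congr rfl this]
      simp
  refine ⟨hpS, ?_, ?_⟩
  · show dN + p ∘ₗ S ∘ₗ x ∘ₗ i = dN + p ∘ₗ x ∘ₗ i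
    rw [← LinearMap.comp_assoc, ← LinearMap.comp_assoc, hpS, LinearMap.comp_assoc]
  · ext n
    set m₀ := i n with hm₀
    set w := h (x m₀) with hw
    have h1 : p (x (dM w)) = 0 := by
      have e := hx' w
      have := congrArg p e
      simp only [map_add, map_zero] at this
      rw [hpd' (x w)] at this
      rw [show p (x w) = 0 from pxh (x m₀)] at this
      rw [show p (x (x w)) = 0 from pxxh (x m₀)] at this
      simpa using this
    have h2 : p (x (i (p (x m₀)))) = p (x (x m₀)) := by
      have e := hhtp' (x m₀)
      have e2 : i (p (x m₀)) = x m₀ - dM w - h (dM (x m₀)) := by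
        rw [← hw] at e
        linear_combination (norm := abel) -e
      rw [e2]
      simp only [map_sub]
      rw [h1, show p (x (h (dM (x m₀)))) = 0 from pxh _]
      abel
    have h3 : p (dM (x m₀)) + p (x (dM m₀)) = -p (x (x m₀)) := by
      have := congrArg p (hx' m₀)
      simp only [map_add, map_zero] at this
      linear_combination (norm := abel) this
    simp only [LinearMap.comp_apply, LinearMap.add_apply, LinearMap.zero_apply, map_add]
    rw [show dN (dN n) = 0 by simpa using LinearMap.ext_iff.mp hdN n]
    rw [← hm₀, h2]
    rw [show dN (p (x m₀)) = p (dM (x m₀)) from (hpd' (x m₀)).symm]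
    rw [show i (dN n) = dM m₀ from (hdi' n).symm]
    rw [eq_sub_of_add_eq h3]
    abel
end

section
/- The canonical multiplet is a cochain complex: on A := O_Y ⊗ S, the operator D := Σ_{α=1}^{n} (multiplication by the class of λ^α in O_Y) ⊗ D_α satisfies D ∘ D = 0. -/
/-!
Write `D_α = c_α - Γ^μ_{αβ} θ^β d_μ` with `c_α = ∂_{θ^α}` and `d_μ = ∂_{x^μ}`. The odd operators
satisfy the Clifford relations `{c_α, c_β} = {θ^α, θ^β} = 0`, `{c_α, θ^β} = δ_α^β`, and the `d_μ`
commute with everything, so `{D_α, D_β} = -(Γ^μ_{αβ} + Γ^μ_{βα}) d_μ`. As the `λ^α` commute with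
each other and with the `D_β`,
`2 D² = Σ λ^α λ^β {D_α, D_β} = -2 Σ_μ (Σ_{α,β} Γ^μ_{αβ} λ^α λ^β) d_μ`,
which vanishes in `O_Y` by the very definition of the Maurer–Cartan ideal.
-/

open scoped TensorProduct

theorem MvPolynomial.commute_pderiv {R σ : Type*} [CommRing R] (i j : σ) :
    Commute (pderiv i : Derivation R (MvPolynomial σ R) (MvPolynomial σ R)).toLinearMap
      (pderiv j).toLinearMap := by
  classical
  have h : ⁅pderiv i, pderiv j⁆ = (0 : Derivation R (MvPolynomial σ R) (MvPolynomial σ R)) :=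
    derivation_ext fun k => by
      rw [Derivation.commutator_apply]
      simp [pderiv_X, Pi.single_apply, apply_ite]
  rw [commute_iff_lie_eq, ← Derivation.commutator_coe_linear_map, h]
  rfl

theorem LinearMap.commute_rTensor_lTensor {R M N : Type*} [CommSemiring R] [AddCommMonoid M]
    [Module R M] [AddCommMonoid N] [Module R N] (f : Module.End R M) (g : Module.End R N) :
    Commute (f.rTensor N) (g.lTensor M) :=
  (rTensor_comp_lTensor ..).trans (lTensor_comp_rTensor ..).symm

section Anticommutator

variable {R A B : Type*} [CommSemiring R] [Semiring A] [Algebra R A] [Semiring B] [Algebra R B]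

variable (R) in
def anticomm : A →ₗ[R] A →ₗ[R] A := LinearMap.mul R A + (LinearMap.mul R A).flip

@[simp]
theorem anticomm_apply (a b : A) : anticomm R a b = a * b + b * a := rfl

theorem anticomm_comm (a b : A) : anticomm R a b = anticomm R b a := add_comm _ _

theorem AlgHom.map_anticomm (φ : A →ₐ[R] B) (a b : A) :
    φ (anticomm R a b) = anticomm R (φ a) (φ b) := by
  simp

theorem anticomm_mul_right_of_commute {a b d : A} (h : Commute a d) :
    anticomm R a (b * d) = anticomm R a b * d := by
  simp only [anticomm_apply, add_mul, mul_assoc, h.eq]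

theorem anticomm_mul_mul_of_commute {b b' d d' : A} (hdb' : Commute d b') (hbd' : Commute b d')
    (hdd' : Commute d d') : anticomm R (b * d) (b' * d') = anticomm R b b' * (d * d') := by
  simp only [anticomm_apply, add_mul, mul_assoc]
  rw [hdb'.left_comm, hbd'.symm.left_comm, hdd'.eq]

theorem anticomm_sum_mul_self_eq_zero {ι κ : Type*} [Fintype ι] [Fintype κ]
    (Γ : κ → ι → ι → R) {a e : ι → A} {f : κ → A}
    (ha : ∀ α β, Commute (a α) (a β)) (hae : ∀ α β, Commute (a α) (e β))
    (he : ∀ α β, anticomm R (e α) (e β) = ∑ μ, (Γ μ α β + Γ μ β α) • f μ)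
    (hquad : ∀ μ, ∑ α, ∑ β, Γ μ α β • (a α * a β) = 0) :
    anticomm R (∑ α, a α * e α) (∑ α, a α * e α) = 0 := by
  have hterm : ∀ α β,
      anticomm R (a α * e α) (a β * e β) = a α * a β * anticomm R (e α) (e β) := by
    intro α β
    simp only [anticomm_apply, mul_add, mul_assoc]
    rw [(hae β α).symm.left_comm, (hae α β).symm.left_comm, (ha β α).left_comm]
  have hsymm : ∀ μ, ∑ α, ∑ β, (Γ μ α β + Γ μ β α) • (a α * a β) = 0 := by
    intro μ
    simp only [add_smul, Finset.sum_add_distrib, hquad, zero_add]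
    rw [Finset.sum_comm]
    simpa only [(ha _ _).eq] using hquad μ
  calc anticomm R (∑ α, a α * e α) (∑ α, a α * e α)
      = ∑ α, ∑ β, ∑ μ, (Γ μ α β + Γ μ β α) • (a α * a β * f μ) := by
        simp only [map_sum, LinearMap.sum_apply, hterm, he, Finset.mul_sum, mul_smul_comm]
        exact Finset.sum_comm
    _ = ∑ μ, (∑ α, ∑ β, (Γ μ α β + Γ μ β α) • (a α * a β)) * f μ := by
        simp only [Finset.sum_mul, smul_mul_assoc]
        rw [eq_comm, Finset.sum_comm]
        exact Finset.sum_congr rfl fun α _ => Finset.sum_comm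
    _ = 0 := by simp only [hsymm, zero_mul, Finset.sum_const_zero]

end Anticommutator

theorem anticomm_sum_map_mul_map_self_eq_zero {R B A C ι κ : Type*} [CommSemiring R]
    [CommSemiring B] [Algebra R B] [Semiring A] [Algebra R A] [Semiring C] [Algebra R C]
    [Fintype ι] [Fintype κ] (φ : B →ₐ[R] C) (ψ : A →ₐ[R] C) (hφψ : ∀ b a, Commute (φ b) (ψ a))
    (Γ : κ → ι → ι → R) {x : ι → B} {D : ι → A} {d : κ → A}
    (hD : ∀ α β, anticomm R (D α) (D β) = ∑ μ, (Γ μ α β + Γ μ β α) • d μ)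
    (hx : ∀ μ, ∑ α, ∑ β, Γ μ α β • (x α * x β) = 0) :
    anticomm R (∑ α, φ (x α) * ψ (D α)) (∑ α, φ (x α) * ψ (D α)) = 0 :=
  anticomm_sum_mul_self_eq_zero Γ (f := fun μ => ψ (d μ)) (fun _ _ => (Commute.all _ _).map φ)
    (fun _ _ => hφψ _ _)
    (fun α β => by simp only [← ψ.map_anticomm, hD, map_sum, map_smul])
    (fun μ => by simpa only [map_mul, map_smul, map_sum, map_zero] using congr(φ $(hx μ)))

section Supercharge

variable {R A ι κ : Type*} [CommRing R] [Ring A] [Algebra R A] [Fintype ι] [Fintype κ]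

def supercharge (Γ : κ → ι → ι → R) (c θ : ι → A) (d : κ → A) (α : ι) : A :=
  c α - ∑ β, ∑ μ, Γ μ α β • (θ β * d μ)

theorem anticomm_supercharge [DecidableEq ι] (Γ : κ → ι → ι → R) {c θ : ι → A} {d : κ → A}
    (hcc : ∀ α β, anticomm R (c α) (c β) = 0)
    (hcθ : ∀ α β, anticomm R (c α) (θ β) = if α = β then 1 else 0)
    (hθθ : ∀ α β, anticomm R (θ α) (θ β) = 0)
    (hcd : ∀ α μ, Commute (c α) (d μ)) (hθd : ∀ α μ, Commute (θ α) (d μ))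
    (hdd : ∀ μ ν, Commute (d μ) (d ν)) (α β : ι) :
    anticomm R (supercharge Γ c θ d α) (supercharge Γ c θ d β)
      = ∑ μ, (Γ μ α β + Γ μ β α) • -d μ := by
  have hcW : ∀ α β, anticomm R (c α) (∑ γ, ∑ μ, Γ μ β γ • (θ γ * d μ))
      = ∑ μ, Γ μ β α • d μ := by
    intro α β
    simp only [map_sum, map_smul, anticomm_mul_right_of_commute (hcd _ _), hcθ, ite_mul, one_mul,
      zero_mul]
    rw [Finset.sum_comm]
    simp [smul_ite, Finset.sum_ite_eq]
  have hWW : ∀ α β, anticomm R (∑ γ, ∑ μ, Γ μ α γ • (θ γ * d μ))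
      (∑ γ, ∑ μ, Γ μ β γ • (θ γ * d μ)) = 0 := by
    have hww : ∀ γ μ δ ν, anticomm R (θ γ * d μ) (θ δ * d ν) = 0 := fun γ μ δ ν => by
      rw [anticomm_mul_mul_of_commute (hθd _ _).symm (hθd _ _) (hdd _ _), hθθ, zero_mul]
    intro α β
    simp only [map_sum, map_smul, LinearMap.sum_apply, LinearMap.smul_apply, hww, smul_zero,
      Finset.sum_const_zero]
  simp only [supercharge, map_sub, LinearMap.sub_apply, hcc, hcW,
    anticomm_comm (∑ γ, ∑ μ, Γ μ α γ • (θ γ * d μ)) (c β), hWW, add_smul, Finset.sum_add_distrib,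
    smul_neg, Finset.sum_neg_distrib]
  abel

end Supercharge

section Clifford

variable {R M : Type*} [CommRing R] [AddCommGroup M] [Module R M]

open CliffordAlgebra

theorem CliffordAlgebra.anticomm_contractLeft {Q : QuadraticForm R M} (d d' : Module.Dual R M) :
    anticomm R (contractLeft (Q := Q) d) (contractLeft d') = 0 := by
  ext x
  simp [contractLeft_comm d d' x]

theorem CliffordAlgebra.anticomm_contractLeft_mulLeft_ι {Q : QuadraticForm R M}
    (d : Module.Dual R M) (v : M) :
    anticomm R (contractLeft (Q := Q) d) (LinearMap.mulLeft R (ι Q v)) = d v • 1 := by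
  ext x
  simp [contractLeft_ι_mul]

theorem ExteriorAlgebra.anticomm_mulLeft_ι (v w : M) :
    anticomm R (LinearMap.mulLeft R (ExteriorAlgebra.ι R v))
      (LinearMap.mulLeft R (ExteriorAlgebra.ι R w)) = 0 := by
  ext x
  simp [← mul_assoc, ← add_mul, ExteriorAlgebra.ι_add_mul_swap]

end Clifford

theorem ExteriorAlgebra.anticomm_contractLeft_proj_mulLeft_ι_single {R ι : Type*} [CommRing R]
    [DecidableEq ι] (α β : ι) :
    anticomm R (CliffordAlgebra.contractLeft (Q := (0 : QuadraticForm R (ι → R)))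
        (LinearMap.proj α)) (LinearMap.mulLeft R (ExteriorAlgebra.ι R (Pi.single β 1)))
      = if α = β then 1 else 0 := by
  rw [CliffordAlgebra.anticomm_contractLeft_mulLeft_ι, LinearMap.proj_apply, Pi.single_apply,
    ite_smul, one_smul, zero_smul]

theorem anticomm_supercharge_lTensor_rTensor {R M N ι κ : Type*} [CommRing R] [AddCommGroup M]
    [Module R M] [AddCommGroup N] [Module R N] [Fintype ι] [DecidableEq ι] [Fintype κ]
    (Γ : κ → ι → ι → R) {c θ : ι → Module.End R N} {d : κ → Module.End R M}
    (hcc : ∀ α β, anticomm R (c α) (c β) = 0)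
    (hcθ : ∀ α β, anticomm R (c α) (θ β) = if α = β then 1 else 0)
    (hθθ : ∀ α β, anticomm R (θ α) (θ β) = 0)
    (hdd : ∀ μ ν, Commute (d μ) (d ν)) (α β : ι) :
    anticomm R
        (supercharge Γ (fun α => (c α).lTensor M) (fun α => (θ α).lTensor M)
          (fun μ => (d μ).rTensor N) α)
        (supercharge Γ (fun α => (c α).lTensor M) (fun α => (θ α).lTensor M)
          (fun μ => (d μ).rTensor N) β)
      = ∑ μ, (Γ μ α β + Γ μ β α) • -(d μ).rTensor N := by
  let L := Module.End.lTensorAlgHom R N M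
  refine anticomm_supercharge Γ (fun α β => ?_) (fun α β => ?_) (fun α β => ?_)
    (fun _ _ => (LinearMap.commute_rTensor_lTensor _ _).symm)
    (fun _ _ => (LinearMap.commute_rTensor_lTensor _ _).symm)
    (fun μ ν => (hdd μ ν).map (Module.End.rTensorAlgHom R M N)) α β
  · exact (L.map_anticomm _ _).symm.trans (by rw [hcc, map_zero])
  · exact (L.map_anticomm _ _).symm.trans (by rw [hcθ, apply_ite L, map_one, map_zero])
  · exact (L.map_anticomm _ _).symm.trans (by rw [hθθ, map_zero])

theorem MvPolynomial.sum_smul_mk_X_mul_mk_X_eq_zero {R σ : Type*} [CommRing R] [Fintype σ]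
    {I : Ideal (MvPolynomial σ R)} (Γ : σ → σ → R)
    (hI : ∑ α, ∑ β, C (Γ α β) * X α * X β ∈ I) :
    ∑ α, ∑ β, Γ α β • (Ideal.Quotient.mk I (X α) * Ideal.Quotient.mk I (X β)) = 0 :=
  calc ∑ α, ∑ β, Γ α β • (Ideal.Quotient.mk I (X α) * Ideal.Quotient.mk I (X β))
      = Ideal.Quotient.mkₐ R I (∑ α, ∑ β, C (Γ α β) * X α * X β) := by
        simp only [map_sum, map_mul, ← smul_eq_C_mul, map_smul, smul_mul_assoc,
          Ideal.Quotient.mkₐ_eq_mk]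
    _ = 0 := Ideal.Quotient.eq_zero_iff_mem.mpr hI

theorem canonical_multiplet_differential_squares_to_zero_general
    {m n : ℕ}
    (Γ : Fin m → Fin n → Fin n → ℂ) :
    let P := MvPolynomial (Fin m) ℂ
    let Ext := ExteriorAlgebra ℂ (Fin n → ℂ)
    -- ∂/∂x^μ acting on the polynomial factor
    let Dx : Fin m → (P ⊗[ℂ] Ext →ₗ[ℂ] P ⊗[ℂ] Ext) := fun μ =>
      LinearMap.rTensor Ext (MvPolynomial.pderiv μ).toLinearMap
    -- left exterior multiplication by θ^β on the exterior factor
    let θmul : Fin n → (P ⊗[ℂ] Ext →ₗ[ℂ] P ⊗[ℂ] Ext) := fun β =>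
      LinearMap.lTensor P (LinearMap.mulLeft ℂ (ExteriorAlgebra.ι ℂ (Pi.single β 1)))
    -- contraction ∂/∂θ^α with the dual basis vector on the exterior factor
    let θder : Fin n → (P ⊗[ℂ] Ext →ₗ[ℂ] P ⊗[ℂ] Ext) := fun α =>
      LinearMap.lTensor P
        (CliffordAlgebra.contractLeft (Q := (0 : QuadraticForm ℂ (Fin n → ℂ)))
          (LinearMap.proj α))
    -- the pure spinor supercharges D_α
    let D : Fin n → (P ⊗[ℂ] Ext →ₗ[ℂ] P ⊗[ℂ] Ext) := fun α =>
      θder α - ∑ β, ∑ μ, Γ μ α β • (θmul β ∘ₗ Dx μ)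
    -- the ring of functions on the Maurer–Cartan variety
    let I : Ideal (MvPolynomial (Fin n) ℂ) := Ideal.span
      (Set.range fun μ : Fin m =>
        ∑ α, ∑ β, MvPolynomial.C (Γ μ α β) * MvPolynomial.X α * MvPolynomial.X β)
    let OY := MvPolynomial (Fin n) ℂ ⧸ I
    let Dtot : OY ⊗[ℂ] (P ⊗[ℂ] Ext) →ₗ[ℂ] OY ⊗[ℂ] (P ⊗[ℂ] Ext) :=
      ∑ α, TensorProduct.map
        (LinearMap.mulLeft ℂ (Ideal.Quotient.mk I (MvPolynomial.X α))) (D α)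
    Dtot ∘ₗ Dtot = 0 := by
  intro P Ext Dx θmul θder D I OY Dtot
  have hD := anticomm_supercharge_lTensor_rTensor (M := P) Γ
    (c := fun α => CliffordAlgebra.contractLeft (LinearMap.proj α))
    (θ := fun β => LinearMap.mulLeft ℂ (ExteriorAlgebra.ι ℂ (Pi.single β 1)))
    (d := fun μ => (MvPolynomial.pderiv μ).toLinearMap)
    (fun _ _ => CliffordAlgebra.anticomm_contractLeft _ _)
    ExteriorAlgebra.anticomm_contractLeft_proj_mulLeft_ι_single
    (fun _ _ => ExteriorAlgebra.anticomm_mulLeft_ι _ _) MvPolynomial.commute_pderiv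
  let x : Fin n → OY := fun α => Ideal.Quotient.mk I (MvPolynomial.X α)
  have hx (μ : Fin m) : ∑ α, ∑ β, Γ μ α β • (x α * x β) = 0 :=
    MvPolynomial.sum_smul_mk_X_mul_mk_X_eq_zero (Γ μ) (Ideal.subset_span ⟨μ, rfl⟩)
  let φ := (Module.End.rTensorAlgHom ℂ OY (P ⊗[ℂ] Ext)).comp (Algebra.lmul ℂ OY)
  let ψ := Module.End.lTensorAlgHom ℂ (P ⊗[ℂ] Ext) OY
  have hDtot : Dtot = ∑ α, φ (x α) * ψ (supercharge Γ θder θmul Dx α) :=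
    Finset.sum_congr rfl fun α _ => (LinearMap.rTensor_comp_lTensor ..).symm
  have h2 : (2 : ℂ) • (Dtot ∘ₗ Dtot) = 0 := by
    rw [two_smul, hDtot]
    exact anticomm_sum_map_mul_map_self_eq_zero φ ψ
      (fun _ _ => LinearMap.commute_rTensor_lTensor _ _) Γ hD hx
  exact (smul_eq_zero.mp h2).resolve_left two_ne_zero

/-- The canonical multiplet is a cochain complex: on A := O_Y ⊗ S, the operator
D := Σ_α (multiplication by the class of λ^α in O_Y) ⊗ D_α squares to zero. -/
theorem canonical_multiplet_differential_squares_to_zero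
    {m n : ℕ} (hm : 0 < m) (hn : 0 < n)
    (Γ : Fin m → Fin n → Fin n → ℂ)
    (hΓ : ∀ μ α β, Γ μ α β = Γ μ β α) :
    let P := MvPolynomial (Fin m) ℂ
    let Ext := ExteriorAlgebra ℂ (Fin n → ℂ)
    -- ∂/∂x^μ acting on the polynomial factor
    let Dx : Fin m → (P ⊗[ℂ] Ext →ₗ[ℂ] P ⊗[ℂ] Ext) := fun μ =>
      LinearMap.rTensor Ext (MvPolynomial.pderiv μ).toLinearMap
    -- left exterior multiplication by θ^β on the exterior factor
    let θmul : Fin n → (P ⊗[ℂ] Ext →ₗ[ℂ] P ⊗[ℂ] Ext) := fun β =>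
      LinearMap.lTensor P (LinearMap.mulLeft ℂ (ExteriorAlgebra.ι ℂ (Pi.single β 1)))
    -- contraction ∂/∂θ^α with the dual basis vector on the exterior factor
    let θder : Fin n → (P ⊗[ℂ] Ext →ₗ[ℂ] P ⊗[ℂ] Ext) := fun α =>
      LinearMap.lTensor P
        (CliffordAlgebra.contractLeft (Q := (0 : QuadraticForm ℂ (Fin n → ℂ)))
          (LinearMap.proj α))
    -- the pure spinor supercharges D_α
    let D : Fin n → (P ⊗[ℂ] Ext →ₗ[ℂ] P ⊗[ℂ] Ext) := fun α =>
      θder α - ∑ β, ∑ μ, Γ μ α β • (θmul β ∘ₗ Dx μ)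
    -- the ring of functions on the Maurer–Cartan variety
    let I : Ideal (MvPolynomial (Fin n) ℂ) := Ideal.span
      (Set.range fun μ : Fin m =>
        ∑ α, ∑ β, MvPolynomial.C (Γ μ α β) * MvPolynomial.X α * MvPolynomial.X β)
    let OY := MvPolynomial (Fin n) ℂ ⧸ I
    let Dtot : OY ⊗[ℂ] (P ⊗[ℂ] Ext) →ₗ[ℂ] OY ⊗[ℂ] (P ⊗[ℂ] Ext) :=
      ∑ α, TensorProduct.map
        (LinearMap.mulLeft ℂ (Ideal.Quotient.mk I (MvPolynomial.X α))) (D α)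
    Dtot ∘ₗ Dtot = 0 :=
  canonical_multiplet_differential_squares_to_zero_general Γ
end
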